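/- arXiv:2105.01801 — 4 statements merged into one kernel-verified Lean document; each statement's English description precedes it below -/
import Mathlib

section
/- For any profile of matroidal valuations, both of the following sets are M-convex: S_1 = {(|A_0|,|A_1|,…,|A_n|) ∈ ℤ^{N∪{0}} : A is a clean allocation}, where A_0 is the set of unallocated items, and S_2 = {(|A_1|,…,|A_n|) ∈ ℤ^N : A is a clean utilitarian optimal allocation}. -/
open Finset

/-- A matroidal valuation on the goods `Fin m`: a monotone submodular function
with `v ∅ = 0` whose marginal gains lie in `{0,1}`. -/
structure Matroidal (m : ℕ) where
  v : Finset (Fin m) → ℕ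
  v_empty : v ∅ = 0
  mono : ∀ ⦃X Y : Finset (Fin m)⦄, X ⊆ Y → v X ≤ v Y
  submodular : ∀ X Y : Finset (Fin m), v (X ∪ Y) + v (X ∩ Y) ≤ v X + v Y
  marginal : ∀ (X : Finset (Fin m)) (e : Fin m), v (insert e X) ≤ v X + 1

/-- An allocation: the bundles are pairwise disjoint. -/
def IsAllocation {n m : ℕ} (A : Fin n → Finset (Fin m)) : Prop :=
  ∀ i j : Fin n, i ≠ j → Disjoint (A i) (A j)

/-- An allocation is clean (for matroidal valuations) iff each bundle is independent. -/
def Clean {n m : ℕ} (P : Fin n → Matroidal m) (A : Fin n → Finset (Fin m)) : Prop :=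
  ∀ i, (P i).v (A i) = (A i).card

/-- A utilitarian optimal allocation. -/
def UtilOpt {n m : ℕ} (P : Fin n → Matroidal m) (A : Fin n → Finset (Fin m)) : Prop :=
  IsAllocation A ∧ ∀ B : Fin n → Finset (Fin m), IsAllocation B →
    ∑ i, (P i).v (B i) ≤ ∑ i, (P i).v (A i)

/-- The sum of the `k` smallest entries of `u`, as the minimum of all `k`-subset sums. -/
noncomputable def kSmallestSum {n : ℕ} (u : Fin n → ℕ) (k : ℕ) : ℕ :=
  sInf {s | ∃ S : Finset (Fin n), S.card = k ∧ s = ∑ i ∈ S, u i}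

/-- `A` is Lorenz dominating: it is an allocation that Lorenz dominates every allocation. -/
def LorenzDominating {n m : ℕ} (P : Fin n → Matroidal m) (A : Fin n → Finset (Fin m)) : Prop :=
  IsAllocation A ∧ ∀ B : Fin n → Finset (Fin m), IsAllocation B →
    ∀ k ≤ n, kSmallestSum (fun i => (P i).v (B i)) k ≤ kSmallestSum (fun i => (P i).v (A i)) k

/-- The set of clean Lorenz dominating allocations. -/
def cLD {n m : ℕ} (P : Fin n → Matroidal m) : Set (Fin n → Finset (Fin m)) :=
  {A | Clean P A ∧ LorenzDominating P A}

/-- `min_{B ∈ cLD(P)} |B_i|`. -/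
noncomputable def minSize {n m : ℕ} (P : Fin n → Matroidal m) (i : Fin n) : ℕ :=
  sInf {c | ∃ A ∈ cLD P, c = (A i).card}

/-- `max_{B ∈ cLD(P)} |B_i|`. -/
noncomputable def maxSize {n m : ℕ} (P : Fin n → Matroidal m) (i : Fin n) : ℕ :=
  sSup {c | ∃ A ∈ cLD P, c = (A i).card}

/-- The SE subsidy for agent `i` under allocation `A` and profile `P`. -/
noncomputable def sePay {n m : ℕ} (P : Fin n → Matroidal m) (A : Fin n → Finset (Fin m))
    (i : Fin n) : ℕ :=
  if (A i).card = minSize P i ∧ (A i).card < Finset.univ.sup (fun j => (A j).card) then 1 else 0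

/-- Restriction of a matroidal valuation to a set `X`. -/
def Matroidal.restrict {m : ℕ} (w : Matroidal m) (X : Finset (Fin m)) : Matroidal m where
  v Y := w.v (X ∩ Y)
  v_empty := by simp [w.v_empty]
  mono := fun {Y Z} h => w.mono (Finset.inter_subset_inter le_rfl h)
  submodular := fun Y Z => by
    have h := w.submodular (X ∩ Y) (X ∩ Z)
    have h1 : X ∩ (Y ∪ Z) = (X ∩ Y) ∪ (X ∩ Z) := Finset.inter_union_distrib_left X Y Z
    have h2 : X ∩ (Y ∩ Z) = (X ∩ Y) ∩ (X ∩ Z) := by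
      ext a; simp [Finset.mem_inter]; tauto
    simpa [h1, h2] using h
  marginal := fun Y e => by
    by_cases he : e ∈ X
    · have h1 : X ∩ insert e Y = insert e (X ∩ Y) := by
        ext a
        simp only [Finset.mem_inter, Finset.mem_insert]
        constructor
        · rintro ⟨ha, h⟩
          rcases h with rfl | hb
          · exact Or.inl rfl
          · exact Or.inr ⟨ha, hb⟩
        · rintro (rfl | ⟨ha, hb⟩)
          · exact ⟨he, Or.inl rfl⟩
          · exact ⟨ha, Or.inr hb⟩
      simpa [h1] using w.marginal (X ∩ Y) e
    · have h1 : X ∩ insert e Y = X ∩ Y := by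
        ext a
        simp only [Finset.mem_inter, Finset.mem_insert]
        constructor
        · rintro ⟨ha, (rfl | hb)⟩
          · exact absurd ha he
          · exact ⟨ha, hb⟩
        · rintro ⟨ha, hb⟩; exact ⟨ha, Or.inr hb⟩
      simp only [h1]
      exact Nat.le_succ _

/-- The set of unallocated items `A_0`. -/
def unalloc {n m : ℕ} (A : Fin n → Finset (Fin m)) : Finset (Fin m) :=
  Finset.univ \ Finset.univ.biUnion (fun i => A i)

/-- A nonempty set `S ⊆ ℤ^E` is M-convex if it satisfies the simultaneous
exchange property. -/
def MConvex {E : Type*} [DecidableEq E] (S : Set (E → ℤ)) : Prop :=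
  S.Nonempty ∧ ∀ x ∈ S, ∀ y ∈ S, ∀ i : E, y i < x i →
    ∃ j : E, x j < y j ∧
      (x - Pi.single i 1 + Pi.single j 1) ∈ S ∧
      (y + Pi.single i 1 - Pi.single j 1) ∈ S

/-!
For matroids `N k` (`k : K`) on a finite set `α`, call `c : K → ℕ` feasible if there are disjoint
sets `X k`, independent in `N k`, with `|X k| = c k`. Feasible vectors satisfy the augmentation
axiom of matroids, by Edmonds' matroid partition argument. Either a shortest walk in the exchange
graph of `X` leads from an unallocated element to one that can join a bundle below its target,
and all exchanges along it can be made at once; or the set `R` of elements reachable from the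
unallocated ones lies in the closure of `X k ∩ R` for every bundle `k` that it cannot enlarge,
so that the target vector is not larger. Encoding `c` as the set `{(k, t) | t < c k}` therefore
gives a matroid whose bases are the feasible vectors of maximum sum, and symmetric basis exchange
in it is the exchange axiom of M-convexity.

Clean allocations are the feasible vectors, all of sum `m`, for the matroids of the `P i`
together with a free matroid for the unallocated bundle `A₀`; clean utilitarian optimal
allocations are the feasible vectors of maximum sum for the matroids of the `P i`.
-/

open Function

namespace Matroid

open Set

variable {α : Type*} {M : Matroid α} {I B₁ B₂ R : Set α} {e : α}

theorem Indep.serial_exchange {ι : Type*} [LinearOrder ι] (hI : M.Indep I) (s : Finset ι)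
    (y z : ι → α) (hz : ∀ a ∈ s, z a ∉ I)
    (hexch : ∀ a ∈ s, M.Indep (insert (z a) (I \ {y a})))
    (hlater : ∀ a ∈ s, ∀ b ∈ s, a < b → ¬ M.Indep (insert (z a) (I \ {y b}))) :
    M.Indep ((I \ y '' s) ∪ z '' s) := by
  classical
  by_contra hJ
  have hJE : (I \ y '' s) ∪ z '' s ⊆ M.E := by
    refine union_subset (sdiff_subset.trans hI.subset_ground) ?_
    rintro _ ⟨a, ha, rfl⟩
    exact (hexch a ha).subset_ground (mem_insert _ _)
  obtain ⟨C, hCJ, hC⟩ := (M.not_indep_iff hJE).1 hJ |>.exists_isCircuit_subset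
  have hzC : ∃ a ∈ s, z a ∈ C := by
    by_contra! h
    refine hC.not_indep (hI.subset fun w hw ↦ ?_)
    obtain hw | ⟨a, ha, rfl⟩ := hCJ hw
    · exact hw.1
    · exact absurd hw (h a ha)
  -- For the last `b` with `z b ∈ C`, the rest of `C` is spanned by `I \ {y b}`, hence so is `z b`.
  obtain ⟨b, hb, hbmax⟩ := (s.filter (z · ∈ C)).exists_max_image id <|
    let ⟨a, ha, haC⟩ := hzC; ⟨a, Finset.mem_filter.2 ⟨ha, haC⟩⟩
  rw [Finset.mem_filter] at hb
  have hIb : M.Indep (I \ {y b}) := hI.subset sdiff_subset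
  have hCb : C \ {z b} ⊆ M.closure (I \ {y b}) := by
    rintro w ⟨hwC, hwb⟩
    obtain hw | ⟨a, ha, rfl⟩ := hCJ hwC
    · exact M.mem_closure_of_mem ⟨hw.1, fun h ↦ hw.2 ⟨b, hb.1, h.symm⟩⟩ hIb.subset_ground
    · have hab : a < b :=
        (hbmax a (Finset.mem_filter.2 ⟨ha, hwC⟩)).lt_of_ne (by rintro rfl; simp at hwb)
      have hza := hlater a ha b hb.1 hab
      rw [hIb.insert_indep_iff] at hza
      push Not at hza
      exact by_contra fun h ↦ hza.1 ⟨(hexch a ha).subset_ground (mem_insert _ _), h⟩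
  have hzb := M.closure_subset_closure_of_subset_closure hCb
    (hC.mem_closure_sdiff_singleton_of_mem hb.2)
  refine (hexch b hb.1).notMem_closure_sdiff_of_mem (mem_insert _ _) ?_
  rwa [insert_sdiff_self_of_notMem fun h ↦ hz b hb.1 h.1]

theorem IsBase.exists_symm_exchange (hB₁ : M.IsBase B₁) (hB₂ : M.IsBase B₂) (he : e ∈ B₁ \ B₂) :
    ∃ f ∈ B₂ \ B₁, M.IsBase (insert f (B₁ \ {e})) ∧ M.IsBase (insert e (B₂ \ {f})) := by
  have heE : e ∈ M.E := hB₁.subset_ground he.1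
  have hC := hB₂.fundCircuit_isCircuit heE he.2
  have hK := M.fundCocircuit_isCocircuit he.1 hB₁
  obtain ⟨f, ⟨hfC, hfK⟩, hfe⟩ : ∃ f ∈ M.fundCircuit e B₂ ∩ M.fundCocircuit e B₁, f ≠ e := by
    by_contra! h
    exact hC.inter_isCocircuit_ne_singleton hK <| eq_singleton_iff_unique_mem.2
      ⟨⟨M.mem_fundCircuit e B₂, M.mem_fundCocircuit e B₁⟩, h⟩
  have hfB₂ : f ∈ B₂ := by
    simpa [hfe] using M.fundCircuit_subset_insert e B₂ hfC
  have hfB₁ : f ∉ B₁ := fun h ↦ hfe <| by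
    simpa using (M.fundCocircuit_inter_eq he.1).subset ⟨hfK, h⟩
  refine ⟨f, ⟨hfB₂, hfB₁⟩, ?_, ?_⟩
  · rw [insert_sdiff_singleton_comm hfe]
    have hfE : f ∈ M.E := hB₂.subset_ground hfB₂
    refine hB₁.exchange_isBase_of_indep' he.1 hfB₁ ?_
    rw [hB₁.mem_fundCocircuit_iff_mem_fundCircuit] at hfK
    exact (hB₁.indep.mem_fundCircuit_iff (hB₁.closure_eq ▸ hfE) hfB₁).1 hfK
  · rw [insert_sdiff_singleton_comm hfe.symm]
    refine hB₂.exchange_isBase_of_indep' hfB₂ he.2 ?_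
    exact (hB₂.indep.mem_fundCircuit_iff (hB₂.closure_eq ▸ heE) he.2).1 hfC

theorem Indep.inter_ground_subset_closure_inter (hI : M.Indep I)
    (hdep : ∀ u ∈ R, u ∉ I → ¬ M.Indep (insert u I))
    (hR : ∀ u ∈ R, u ∉ I → ∀ w ∈ I, M.Indep (insert u (I \ {w})) → w ∈ R) :
    R ∩ M.E ⊆ M.closure (I ∩ R) := by
  rintro u ⟨hu, huE⟩
  by_cases huI : u ∈ I
  · exact M.mem_closure_of_mem ⟨huI, hu⟩ (inter_subset_left.trans hI.subset_ground)
  have hucl : u ∈ M.closure I := by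
    by_contra h
    exact hdep u hu huI (hI.insert_indep_iff.2 (Or.inl ⟨huE, h⟩))
  have hC := hI.fundCircuit_isCircuit hucl huI
  refine M.closure_subset_closure ?_
    (hC.mem_closure_sdiff_singleton_of_mem (M.mem_fundCircuit u I))
  rintro w ⟨hwC, hwu⟩
  have hwu : w ≠ u := hwu
  have hwI : w ∈ I := by simpa [hwu] using M.fundCircuit_subset_insert u I hwC
  refine ⟨hwI, hR u hu huI w hwI ?_⟩
  rw [insert_sdiff_singleton_comm hwu.symm]
  exact (hI.mem_fundCircuit_iff hucl huI).1 hwC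

theorem Indep.card_inter_le_of_exchange_closed [DecidableEq α] {I J R : Finset α}
    (hI : M.Indep I) (hJ : M.Indep J)
    (hdep : ∀ u ∈ R, u ∉ I → ¬ M.Indep (insert u (I : Set α)))
    (hR : ∀ u ∈ R, u ∉ I → ∀ w ∈ I, M.Indep (insert u ((I : Set α) \ {w})) → w ∈ R) :
    (J ∩ R).card ≤ (I ∩ R).card := by
  have hsub : ((J ∩ R : Finset α) : Set α) ⊆ M.closure ((I ∩ R : Finset α) : Set α) := by
    push_cast
    exact fun a ha ↦ hI.inter_ground_subset_closure_inter (R := R) (by simpa using hdep)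
      (by simpa using hR) ⟨ha.2, hJ.subset_ground ha.1⟩
  have := (hJ.subset (by simp)).encard_le_eRk_of_subset hsub
  rw [eRk_closure_eq, (hI.subset (by simp)).eRk_eq_encard] at this
  exact_mod_cast this

end Matroid

section Walk

variable {β : Type*} (r : β → β → Prop)

def IsWalk (z : ℕ → β) (ℓ : ℕ) : Prop := ∀ i < ℓ, r (z i) (z (i + 1))

variable {r}

theorem IsWalk.snoc {z : ℕ → β} {ℓ : ℕ} (hz : IsWalk r z ℓ) {b : β} (hb : r (z ℓ) b) :
    IsWalk r (fun i ↦ if i ≤ ℓ then z i else b) (ℓ + 1) := by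
  intro i hi
  obtain rfl | hi := eq_or_lt_of_le (Nat.le_of_lt_succ hi)
  · simpa using hb
  · simpa [hi.le, Nat.succ_le_of_lt hi] using hz i hi

theorem exists_walk_shortcut_free {S T : β → Prop}
    (h : ∃ ℓ z, S (z 0) ∧ IsWalk r z ℓ ∧ T (z ℓ)) :
    ∃ ℓ z, S (z 0) ∧ IsWalk r z ℓ ∧ T (z ℓ) ∧ (∀ i < ℓ, ¬ T (z i)) ∧
      ∀ i j, i + 1 < j → j ≤ ℓ → ¬ r (z i) (z j) := by
  classical
  obtain ⟨z, hS, hz, hT⟩ := Nat.find_spec h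
  have hmin := fun ℓ (hℓ : ℓ < Nat.find h) ↦ Nat.find_min h hℓ
  refine ⟨_, z, hS, hz, hT, fun i hi hTi ↦ hmin i hi ⟨z, hS, fun t ht ↦ hz t (ht.trans hi), hTi⟩,
    fun i j hij hj hr ↦ hmin (Nat.find h - (j - i - 1)) (by omega) ?_⟩
  refine ⟨fun t ↦ if t ≤ i then z t else z (t + (j - i - 1)), by simpa using hS, ?_, ?_⟩
  · intro t ht
    by_cases hti : t < i
    · simpa [hti.le, Nat.succ_le_of_lt hti] using hz t (by omega)
    obtain rfl | hti := eq_or_lt_of_le (not_lt.1 hti)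
    · simpa [show i + 1 + (j - i - 1) = j by omega] using hr
    · simpa [hti.not_ge, show ¬ t + 1 ≤ i by omega,
        show t + 1 + (j - i - 1) = t + (j - i - 1) + 1 by omega] using hz _ (by omega)
  · simpa [show ¬ Nat.find h - (j - i - 1) ≤ i by omega,
      show Nat.find h - (j - i - 1) + (j - i - 1) = Nat.find h by omega] using hT

end Walk

section Feasible

variable {K α : Type*} {N : K → Matroid α}

def IsIndepAllocation (N : K → Matroid α) (X : K → Finset α) : Prop :=
  Pairwise (Disjoint on X) ∧ ∀ k, (N k).Indep (X k)

def IsFeasible (N : K → Matroid α) (c : K → ℕ) : Prop :=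
  ∃ X, IsIndepAllocation N X ∧ ∀ k, (X k).card = c k

def IsMaxFeasible [Fintype K] (N : K → Matroid α) (c : K → ℕ) : Prop :=
  IsFeasible N c ∧ ∀ d, IsFeasible N d → ∑ k, d k ≤ ∑ k, c k

theorem isFeasible_zero : IsFeasible N 0 :=
  ⟨fun _ ↦ ∅, ⟨fun _ _ _ ↦ disjoint_empty_left _, fun k ↦ by simp⟩, fun _ ↦ rfl⟩

theorem IsFeasible.mono {c d : K → ℕ} (hc : IsFeasible N c) (hdc : d ≤ c) : IsFeasible N d := by
  obtain ⟨X, hX, hXc⟩ := hc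
  choose Y hYX hYd using fun k ↦ exists_subset_card_eq ((hXc k).symm ▸ hdc k : d k ≤ (X k).card)
  exact ⟨Y, ⟨fun k l hkl ↦ (hX.1 hkl).mono (hYX k) (hYX l),
    fun k ↦ (hX.2 k).subset (mod_cast hYX k)⟩, hYd⟩

theorem IsFeasible.le_card [Fintype α] {c : K → ℕ} (hc : IsFeasible N c) (k : K) :
    c k ≤ Fintype.card α := by
  obtain ⟨X, -, hXc⟩ := hc
  exact hXc k ▸ card_le_univ (X k)

variable [Fintype K] [Fintype α] [DecidableEq α]

theorem IsFeasible.sum_le_card {c : K → ℕ} (hc : IsFeasible N c) :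
    ∑ k, c k ≤ Fintype.card α := by
  obtain ⟨X, hX, hXc⟩ := hc
  simp_rw [← hXc, ← card_biUnion fun k _ l _ hkl ↦ hX.1 hkl]
  exact card_le_univ _

theorem exists_isMaxFeasible : ∃ c, IsMaxFeasible N c := by
  classical
  let P : ℕ → Prop := fun t ↦ ∃ c, IsFeasible N c ∧ ∑ k, c k = t
  obtain ⟨c, hc, hsum⟩ : P (Nat.findGreatest P (Fintype.card α)) :=
    Nat.findGreatest_spec (Nat.zero_le _) ⟨0, isFeasible_zero, by simp⟩
  exact ⟨c, hc, fun d hd ↦ hsum ▸ Nat.le_findGreatest hd.sum_le_card ⟨d, hd, rfl⟩⟩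

theorem isMaxFeasible_iff_of_sum_eq_card {c₀ : K → ℕ} (h₀ : IsFeasible N c₀)
    (hsum₀ : ∑ k, c₀ k = Fintype.card α) {c : K → ℕ} :
    IsMaxFeasible N c ↔ IsFeasible N c ∧ ∑ k, c k = Fintype.card α :=
  ⟨fun hc ↦ ⟨hc.1, le_antisymm hc.1.sum_le_card (hsum₀ ▸ hc.2 c₀ h₀)⟩,
    fun hc ↦ ⟨hc.1, fun _ hd ↦ hc.2 ▸ hd.sum_le_card⟩⟩

end Feasible

section Augmentation

variable {K α : Type*} {N : K → Matroid α}

def ExchangeArc (N : K → Matroid α) (X : K → Finset α) (u w : α) : Prop :=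
  ∃ k, w ∈ X k ∧ u ∉ X k ∧ (N k).Indep (insert u ((X k : Set α) \ {w}))

def Augmentable (N : K → Matroid α) (X : K → Finset α) (c : K → ℕ) (u : α) : Prop :=
  ∃ k, (X k).card < c k ∧ u ∉ X k ∧ (N k).Indep (insert u (X k : Set α))

/-- A walk `vert 0 → ⋯ → vert len` in the exchange graph of `X` from an unallocated element, in
which `vert i` replaces `vert (i + 1)` in the bundle `color i` and `vert len` can join the bundle
`color len`. The last two fields hold for a shortest such walk. -/
structure AugmentingWalk (N : K → Matroid α) (X : K → Finset α) where
  len : ℕ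
  vert : ℕ → α
  color : ℕ → K
  free : ∀ k, vert 0 ∉ X k
  arc : ∀ i < len, vert (i + 1) ∈ X (color i) ∧ vert i ∉ X (color i) ∧
    (N (color i)).Indep (insert (vert i) ((X (color i) : Set α) \ {vert (i + 1)}))
  last : vert len ∉ X (color len) ∧
    (N (color len)).Indep (insert (vert len) (X (color len) : Set α))
  not_last : ∀ i < len, vert i ∉ X (color len) →
    ¬ (N (color len)).Indep (insert (vert i) (X (color len) : Set α))
  no_shortcut : ∀ i j, i + 1 < j → j ≤ len → ¬ ExchangeArc N X (vert i) (vert j)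

namespace AugmentingWalk

variable {X : K → Finset α} (W : AugmentingWalk N X)

theorem vert_ne {i j : ℕ} (hij : i < j) (hj : j ≤ W.len) : W.vert i ≠ W.vert j := by
  intro h
  obtain rfl | hj := eq_or_lt_of_le hj
  · exact W.not_last i hij (h ▸ W.last.1) (h ▸ W.last.2)
  · obtain ⟨hmem, hnotMem, hind⟩ := W.arc j hj
    exact W.no_shortcut i (j + 1) (by omega) hj ⟨W.color j, hmem, h ▸ hnotMem, h ▸ hind⟩

theorem eq_of_vert_eq {i j : ℕ} (hi : i ≤ W.len) (hj : j ≤ W.len) (h : W.vert i = W.vert j) :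
    i = j := by
  by_contra hne
  obtain hij | hji := lt_or_gt_of_ne hne
  · exact W.vert_ne hij hj h
  · exact W.vert_ne hji hi h.symm

variable [DecidableEq K]

def leaving (k : K) : Finset ℕ := (range W.len).filter (W.color · = k)

def entering (k : K) : Finset ℕ := (range (W.len + 1)).filter (W.color · = k)

theorem mem_leaving {k : K} {i : ℕ} : i ∈ W.leaving k ↔ i < W.len ∧ W.color i = k := by
  simp [leaving]

theorem mem_entering {k : K} {i : ℕ} : i ∈ W.entering k ↔ i ≤ W.len ∧ W.color i = k := by
  simp [entering]

variable [DecidableEq α]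

def exchanged (k : K) : Finset α :=
  (X k \ (W.leaving k).image (fun i ↦ W.vert (i + 1))) ∪ (W.leaving k).image W.vert

def augment (k : K) : Finset α :=
  (X k \ (W.leaving k).image (fun i ↦ W.vert (i + 1))) ∪ (W.entering k).image W.vert

theorem augment_eq (k : K) : W.augment k =
    if W.color W.len = k then insert (W.vert W.len) (W.exchanged k) else W.exchanged k := by
  have : W.entering k =
      if W.color W.len = k then insert W.len (W.leaving k) else W.leaving k := by
    rw [entering, range_add_one, filter_insert]
    rfl
  rw [augment, exchanged, this]
  split_ifs <;> simp [image_insert]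

theorem vert_mem_image_leaving (hX : IsIndepAllocation N X) {j : ℕ} (hj : j ≤ W.len) {k : K}
    (hjk : W.vert j ∈ X k) : W.vert j ∈ (W.leaving k).image (fun i ↦ W.vert (i + 1)) := by
  obtain _ | i := j
  · exact absurd hjk (W.free k)
  refine mem_image.2 ⟨i, W.mem_leaving.2 ⟨by omega, ?_⟩, rfl⟩
  by_contra hne
  exact disjoint_left.1 (hX.1 hne) (W.arc i (by omega)).1 hjk

theorem augment_disjoint (hX : IsIndepAllocation N X) : Pairwise (Disjoint on W.augment) := by
  intro k l hkl
  rw [onFun, Finset.disjoint_left]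
  intro a hak hal
  simp only [augment, mem_union, mem_sdiff, mem_image, mem_entering] at hak hal
  obtain ⟨hak, hakL⟩ | ⟨i, ⟨hi, rfl⟩, rfl⟩ := hak
  · obtain ⟨hal, -⟩ | ⟨j, ⟨hj, rfl⟩, rfl⟩ := hal
    · exact disjoint_left.1 (hX.1 hkl) hak hal
    · exact hakL (mem_image.1 (W.vert_mem_image_leaving hX hj hak))
  · obtain ⟨hal, halL⟩ | ⟨j, ⟨hj, rfl⟩, hij⟩ := hal
    · exact halL (mem_image.1 (W.vert_mem_image_leaving hX hi hal))
    · exact hkl (congrArg W.color (W.eq_of_vert_eq hi hj hij.symm))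

theorem card_exchanged (k : K) : (W.exchanged k).card = (X k).card := by
  have hinj : ∀ {f : ℕ → ℕ}, StrictMono f → ∀ {s : Finset ℕ}, (∀ i ∈ s, f i ≤ W.len) →
      (s.image (W.vert ∘ f)).card = s.card := by
    intro f hf s hs
    refine card_image_of_injOn fun i hi j hj h ↦ hf.injective ?_
    exact W.eq_of_vert_eq (hs i hi) (hs j hj) h
  have hL : ((W.leaving k).image (fun i ↦ W.vert (i + 1))).card = (W.leaving k).card :=
    hinj (f := (· + 1)) (fun _ _ h ↦ Nat.add_lt_add_right h 1) fun i hi ↦ (W.mem_leaving.1 hi).1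
  have hE : ((W.leaving k).image W.vert).card = (W.leaving k).card :=
    hinj (f := id) strictMono_id fun i hi ↦ (W.mem_leaving.1 hi).1.le
  have hLX : (W.leaving k).image (fun i ↦ W.vert (i + 1)) ⊆ X k := by
    intro a ha
    obtain ⟨i, hi, rfl⟩ := mem_image.1 ha
    obtain ⟨hilen, rfl⟩ := W.mem_leaving.1 hi
    exact (W.arc i hilen).1
  have hdisj : Disjoint (X k \ (W.leaving k).image (fun i ↦ W.vert (i + 1)))
      ((W.leaving k).image W.vert) := by
    refine disjoint_left.2 fun a ha ha' ↦ ?_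
    obtain ⟨i, hi, rfl⟩ := mem_image.1 ha'
    obtain ⟨hilen, rfl⟩ := W.mem_leaving.1 hi
    exact (W.arc i hilen).2.1 (mem_sdiff.1 ha).1
  rw [exchanged, card_union_of_disjoint hdisj, card_sdiff_of_subset hLX, hL, hE,
    Nat.sub_add_cancel (hL ▸ card_le_card hLX)]

theorem indep_exchanged (hX : IsIndepAllocation N X) (k : K) : (N k).Indep (W.exchanged k) := by
  have := (hX.2 k).serial_exchange (W.leaving k) (fun i ↦ W.vert (i + 1)) W.vert
    (fun i hi ↦ by obtain ⟨hlt, rfl⟩ := W.mem_leaving.1 hi; exact (W.arc i hlt).2.1)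
    (fun i hi ↦ by obtain ⟨hlt, rfl⟩ := W.mem_leaving.1 hi; exact (W.arc i hlt).2.2)
    (fun i hi j hj hij hind ↦ by
      obtain ⟨hilt, rfl⟩ := W.mem_leaving.1 hi
      obtain ⟨hjlt, hji⟩ := W.mem_leaving.1 hj
      exact W.no_shortcut i (j + 1) (by omega) hjlt
        ⟨W.color i, hji ▸ (W.arc j hjlt).1, (W.arc i hilt).2.1, hind⟩)
  simpa [exchanged] using this

theorem vert_len_notMem_exchanged : W.vert W.len ∉ W.exchanged (W.color W.len) := by
  simp only [exchanged, mem_union, mem_sdiff, mem_image, W.mem_leaving, not_or, not_and,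
    not_exists]
  exact ⟨fun h ↦ absurd h W.last.1, fun i hi ↦ W.vert_ne hi.1 le_rfl⟩

/-- `vert len` is outside the closure of the exchanged bundle, because every `vert i` with
`i < len` is spanned by the original bundle `X (color len)`. -/
theorem indep_insert_exchanged (hX : IsIndepAllocation N X) :
    (N (W.color W.len)).Indep (insert (W.vert W.len) (W.exchanged (W.color W.len) : Set α)) := by
  set k := W.color W.len
  have hXk := hX.2 k
  have hspan : (W.exchanged k : Set α) ⊆ (N k).closure (X k) := by
    intro a ha
    simp only [exchanged, coe_union, coe_sdiff, coe_image, Set.mem_union, Set.mem_sdiff,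
      Set.mem_image, mem_coe, W.mem_leaving] at ha
    obtain ⟨ha, -⟩ | ⟨i, ⟨hi, hik⟩, rfl⟩ := ha
    · exact (N k).mem_closure_of_mem ha hXk.subset_ground
    by_cases hiX : W.vert i ∈ X k
    · exact (N k).mem_closure_of_mem hiX hXk.subset_ground
    have := W.not_last i hi hiX
    rw [hXk.insert_indep_iff] at this
    push Not at this
    refine by_contra fun h ↦ this.1 ⟨?_, h⟩
    exact (hik ▸ (W.arc i hi).2.2).subset_ground (Set.mem_insert _ _)
  rw [(W.indep_exchanged hX k).insert_indep_iff_of_notMem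
    (mod_cast W.vert_len_notMem_exchanged)]
  refine ⟨W.last.2.subset_ground (Set.mem_insert _ _), fun h ↦ ?_⟩
  have := (N k).closure_subset_closure_of_subset_closure hspan h
  exact (hXk.insert_indep_iff_of_notMem W.last.1).1 W.last.2 |>.2 this

theorem isFeasible_augment (hX : IsIndepAllocation N X) :
    IsFeasible N ((fun k ↦ (X k).card) + Pi.single (W.color W.len) 1) := by
  refine ⟨W.augment, ⟨W.augment_disjoint hX, fun k ↦ ?_⟩, fun k ↦ ?_⟩
  · rw [W.augment_eq]
    split_ifs with hk
    · subst hk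
      simpa using W.indep_insert_exchanged hX
    · exact W.indep_exchanged hX k
  · rw [W.augment_eq, Pi.add_apply, Pi.single_apply]
    split_ifs with hk hk' hk'
    · subst hk
      rw [card_insert_of_notMem W.vert_len_notMem_exchanged, W.card_exchanged]
    · exact absurd hk.symm hk'
    · exact absurd hk'.symm hk
    · rw [W.card_exchanged, add_zero]

end AugmentingWalk

theorem exists_augmentingWalk {X : K → Finset α} {c : K → ℕ}
    (h : ∃ ℓ z, (∀ k, z 0 ∉ X k) ∧ IsWalk (ExchangeArc N X) z ℓ ∧ Augmentable N X c (z ℓ)) :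
    ∃ W : AugmentingWalk N X, (X (W.color W.len)).card < c (W.color W.len) := by
  obtain ⟨ℓ, z, hfree, hz, ⟨k, hk, hlast⟩, hnot, hshort⟩ :=
    exists_walk_shortcut_free (S := fun a ↦ ∀ k, a ∉ X k) (T := Augmentable N X c) h
  let color : ℕ → K := fun i ↦ if h : i < ℓ then (hz i h).choose else k
  have hcolor : color ℓ = k := dif_neg (lt_irrefl ℓ)
  let W : AugmentingWalk N X :=
    { len := ℓ
      vert := z
      color := color
      free := hfree
      arc := fun i hi ↦ by simpa [color, hi] using (hz i hi).choose_spec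
      last := hcolor ▸ hlast
      not_last := fun i hi hiX hind ↦ hnot i hi ⟨k, hk, hcolor ▸ hiX, hcolor ▸ hind⟩
      no_shortcut := hshort }
  exact ⟨W, show (X (color ℓ)).card < c (color ℓ) from hcolor ▸ hk⟩

theorem sum_card_le_of_card_inter_le [Fintype K] [Fintype α] [DecidableEq α]
    {X Y : K → Finset α} (hY : Pairwise (Disjoint on Y)) (R : Finset α)
    (hR : ∀ a ∉ R, ∃ k, a ∈ X k) (h : ∀ k, (Y k ∩ R).card ≤ (X k ∩ R).card) :
    ∑ k, (Y k).card ≤ ∑ k, (X k).card := by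
  have hout : ∑ k, (Y k \ R).card ≤ ∑ k, (X k \ R).card :=
    calc ∑ k, (Y k \ R).card = (univ.biUnion fun k ↦ Y k \ R).card :=
          (card_biUnion fun k _ l _ hkl ↦ (hY hkl).mono sdiff_subset sdiff_subset).symm
      _ ≤ (univ \ R).card := card_le_card fun a ha ↦ by
          obtain ⟨k, -, ha⟩ := mem_biUnion.1 ha
          exact mem_sdiff.2 ⟨mem_univ a, (mem_sdiff.1 ha).2⟩
      _ ≤ (univ.biUnion fun k ↦ X k \ R).card := card_le_card fun a ha ↦ by
          have haR := (mem_sdiff.1 ha).2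
          obtain ⟨k, hk⟩ := hR a haR
          exact mem_biUnion.2 ⟨k, mem_univ k, mem_sdiff.2 ⟨hk, haR⟩⟩
      _ ≤ ∑ k, (X k \ R).card := card_biUnion_le
  calc ∑ k, (Y k).card = ∑ k, (Y k ∩ R).card + ∑ k, (Y k \ R).card := by
        rw [← sum_add_distrib]; simp only [card_inter_add_card_sdiff]
    _ ≤ ∑ k, (X k ∩ R).card + ∑ k, (X k \ R).card :=
        add_le_add (sum_le_sum fun k _ ↦ h k) hout
    _ = ∑ k, (X k).card := by
        rw [← sum_add_distrib]; simp only [card_inter_add_card_sdiff]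

theorem sum_card_le_of_not_exists_walk [Fintype K] [Fintype α] [DecidableEq α]
    {X Y : K → Finset α} (hX : IsIndepAllocation N X) (hY : IsIndepAllocation N Y)
    (h : ¬ ∃ ℓ z, (∀ k, z 0 ∉ X k) ∧ IsWalk (ExchangeArc N X) z ℓ ∧
      Augmentable N X (fun k ↦ (Y k).card) (z ℓ)) :
    ∑ k, (Y k).card ≤ ∑ k, (X k).card := by
  classical
  let R : Finset α := univ.filter fun u ↦
    ∃ ℓ z, (∀ k, z 0 ∉ X k) ∧ IsWalk (ExchangeArc N X) z ℓ ∧ z ℓ = u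
  have hRclosed : ∀ u ∈ R, ∀ w, ExchangeArc N X u w → w ∈ R := by
    intro u hu w huw
    obtain ⟨ℓ, z, hfree, hz, rfl⟩ := (mem_filter.1 hu).2
    exact mem_filter.2 ⟨mem_univ w, ℓ + 1, _, by simpa using hfree, hz.snoc huw, by simp⟩
  have hRfree : ∀ a ∉ R, ∃ k, a ∈ X k := by
    intro a ha
    by_contra! hfree
    exact ha <| mem_filter.2 ⟨mem_univ a, 0, fun _ ↦ a, hfree, fun _ h ↦ absurd h (by omega), rfl⟩
  refine sum_card_le_of_card_inter_le hY.1 R hRfree fun k ↦ ?_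
  by_cases hopen : ∃ u ∈ R, u ∉ X k ∧ (N k).Indep (insert u (X k : Set α))
  · obtain ⟨u, hu, huX, hind⟩ := hopen
    obtain ⟨ℓ, z, hfree, hz, rfl⟩ := (mem_filter.1 hu).2
    have hXR : X k ⊆ R := fun w hw ↦
      hRclosed _ hu w ⟨k, hw, huX, hind.subset (Set.insert_subset_insert Set.sdiff_subset)⟩
    calc (Y k ∩ R).card ≤ (Y k).card := card_le_card inter_subset_left
      _ ≤ (X k).card := not_lt.1 fun hlt ↦ h ⟨ℓ, z, hfree, hz, k, hlt, huX, hind⟩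
      _ = (X k ∩ R).card := by rw [inter_eq_left.2 hXR]
  push Not at hopen
  exact (hX.2 k).card_inter_le_of_exchange_closed (hY.2 k) hopen
    fun u hu huX w hw hind ↦ hRclosed u hu w ⟨k, hw, huX, hind⟩

theorem IsFeasible.exists_lt_add_single [Fintype K] [DecidableEq K] [Fintype α] [DecidableEq α]
    {c c' : K → ℕ} (hc : IsFeasible N c) (hc' : IsFeasible N c') (hlt : ∑ k, c k < ∑ k, c' k) :
    ∃ k, c k < c' k ∧ IsFeasible N (c + Pi.single k 1) := by
  obtain ⟨X, hX, hXc⟩ := hc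
  obtain ⟨Y, hY, hYc⟩ := hc'
  obtain rfl : (fun k ↦ (X k).card) = c := funext hXc
  obtain rfl : (fun k ↦ (Y k).card) = c' := funext hYc
  by_cases hwalk : ∃ ℓ z, (∀ k, z 0 ∉ X k) ∧ IsWalk (ExchangeArc N X) z ℓ ∧
      Augmentable N X (fun k ↦ (Y k).card) (z ℓ)
  · obtain ⟨W, hW⟩ := exists_augmentingWalk hwalk
    exact ⟨_, hW, W.isFeasible_augment hX⟩
  · exact absurd (sum_card_le_of_not_exists_walk hX hY hwalk) hlt.not_ge

end Augmentation

section CountMatroid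

variable {K β : Type*} [DecidableEq K]

def countVec (s : Finset (K × β)) (k : K) : ℕ := (s.filter (·.1 = k)).card

theorem sum_countVec [Fintype K] (s : Finset (K × β)) : ∑ k, countVec s k = s.card :=
  (card_eq_sum_card_fiberwise fun p _ ↦ mem_univ p.1).symm

theorem countVec_mono {s t : Finset (K × β)} (hst : s ⊆ t) : countVec s ≤ countVec t :=
  fun _ ↦ card_le_card (filter_subset_filter _ hst)

theorem countVec_insert [DecidableEq β] {s : Finset (K × β)} {p : K × β} (hp : p ∉ s) :
    countVec (insert p s) = countVec s + Pi.single p.1 1 := by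
  ext k
  simp only [countVec, filter_insert, Pi.add_apply, Pi.single_apply]
  split_ifs with h h' h'
  · rw [card_insert_of_notMem fun h ↦ hp (mem_filter.1 h).1]
  · exact absurd h.symm h'
  · exact absurd h'.symm h
  · rfl

theorem countVec_erase [DecidableEq β] {s : Finset (K × β)} {p : K × β} (hp : p ∈ s) :
    countVec (s.erase p) = countVec s - Pi.single p.1 1 := by
  conv_rhs => rw [← insert_erase hp, countVec_insert (notMem_erase p s)]
  simp

variable [Fintype K]

def stair (M : ℕ) (c : K → ℕ) : Finset (K × Fin M) := {p | (p.2 : ℕ) < c p.1}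

theorem countVec_stair {M : ℕ} {c : K → ℕ} (hc : ∀ k, c k ≤ M) :
    countVec (stair M c) = c := by
  ext k
  rw [countVec, stair, filter_filter, ← min_eq_right (hc k), ← Fin.card_filter_val_lt]
  refine card_nbij' Prod.snd (k, ·) ?_ (fun t ht ↦ by simpa using ht) ?_ fun _ _ ↦ rfl <;>
    rintro ⟨l, t⟩ h <;> obtain ⟨ht, rfl⟩ : (t : ℕ) < c l ∧ l = k := by simpa using h
  · simpa using ht
  · rfl

variable {α : Type*} [Fintype α] [DecidableEq α] {N : K → Matroid α}

def countMatroid (N : K → Matroid α) : Matroid (K × Fin (Fintype.card α)) :=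
  (IndepMatroid.ofFinset Set.univ (fun s ↦ IsFeasible N (countVec s))
    (by convert isFeasible_zero (N := N); ext; simp [countVec])
    (fun _ _ hJ hIJ ↦ hJ.mono (countVec_mono hIJ))
    (fun I J hI hJ hIJ ↦ by
      rw [← sum_countVec, ← sum_countVec] at hIJ
      obtain ⟨k, hk, hfeas⟩ := hI.exists_lt_add_single hJ hIJ
      obtain ⟨p, hpJ, hpI⟩ : ∃ p ∈ J.filter (·.1 = k), p ∉ I.filter (·.1 = k) :=
        not_subset.1 fun h ↦ hk.not_ge (card_le_card h)
      rw [mem_filter] at hpJ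
      refine ⟨p, hpJ.1, fun h ↦ hpI (mem_filter.2 ⟨h, hpJ.2⟩), ?_⟩
      rwa [countVec_insert fun h ↦ hpI (mem_filter.2 ⟨h, hpJ.2⟩), hpJ.2])
    (fun _ _ ↦ Set.subset_univ _)).matroid

@[simp] theorem countMatroid_indep_iff {s : Finset (K × Fin (Fintype.card α))} :
    (countMatroid N).Indep s ↔ IsFeasible N (countVec s) := by
  rw [countMatroid, IndepMatroid.matroid_Indep, IndepMatroid.ofFinset_indep]

theorem isBase_stair {c : K → ℕ} (hc : IsMaxFeasible N c) :
    (countMatroid N).IsBase (stair (Fintype.card α) c) := by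
  have hcount := countVec_stair hc.1.le_card
  refine Matroid.Indep.isBase_of_maximal (by simpa [hcount] using hc.1) fun J hJ hsub ↦ ?_
  lift J to Finset (K × Fin (Fintype.card α)) using J.toFinite
  rw [countMatroid_indep_iff] at hJ
  rw [coe_subset] at hsub
  refine congrArg _ (eq_of_subset_of_card_le hsub ?_)
  rw [← sum_countVec, ← sum_countVec, hcount]
  exact hc.2 _ hJ

theorem isMaxFeasible_countVec {s : Finset (K × Fin (Fintype.card α))}
    (hs : (countMatroid N).IsBase s) : IsMaxFeasible N (countVec s) := by
  refine ⟨countMatroid_indep_iff.1 hs.indep, fun d hd ↦ ?_⟩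
  have hind : (countMatroid N).Indep (stair (Fintype.card α) d) := by
    simpa [countVec_stair hd.le_card] using hd
  have := hind.encard_le_eRank
  rw [← hs.encard_eq_eRank, Set.encard_coe_eq_coe_finsetCard, Set.encard_coe_eq_coe_finsetCard,
    Nat.cast_le, ← sum_countVec, countVec_stair hd.le_card] at this
  rwa [sum_countVec]

end CountMatroid

section MConvex

variable {K : Type*} [DecidableEq K]

theorem natCast_sub_single_add_single {c : K → ℕ} {a : K} (ha : 1 ≤ c a) (b : K) :
    (fun k ↦ ((c - Pi.single a 1 + Pi.single b 1 : K → ℕ) k : ℤ)) =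
      (fun k ↦ (c k : ℤ)) - Pi.single a 1 + Pi.single b 1 := by
  ext k
  simp only [Pi.add_apply, Pi.sub_apply, Pi.single_apply]
  split_ifs with hka hkb hkb <;> subst_vars <;> omega

theorem mConvex_setOf_isMaxFeasible [Fintype K] {α : Type*} [Fintype α] [DecidableEq α]
    (N : K → Matroid α) :
    MConvex {x : K → ℤ | ∃ c, IsMaxFeasible N c ∧ (fun k ↦ (c k : ℤ)) = x} := by
  refine ⟨let ⟨c, hc⟩ := exists_isMaxFeasible (N := N); ⟨_, c, hc, rfl⟩, ?_⟩
  rintro _ ⟨c, hc, rfl⟩ _ ⟨c', hc', rfl⟩ i hxy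
  have hi : c' i < c i := by simpa using hxy
  set M := Fintype.card α
  set e : K × Fin M := (i, ⟨c' i, hi.trans_le (hc.1.le_card i)⟩)
  have he : e ∈ (stair M c : Set (K × Fin M)) \ stair M c' := by simp [e, stair, hi]
  obtain ⟨f, hf, hB₁, hB₂⟩ := (isBase_stair hc).exists_symm_exchange (isBase_stair hc') he
  have hf' : (f.2 : ℕ) < c' f.1 ∧ c f.1 ≤ f.2 := by simpa [stair] using hf
  have hfe : f.1 ≠ i := by rintro h; rw [h] at hf'; omega
  have hcount := countVec_stair hc.1.le_card
  have hcount' := countVec_stair hc'.1.le_card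
  refine ⟨f.1, by simpa using hf'.2.trans_lt hf'.1, ⟨_, ?_, natCast_sub_single_add_single
    (by omega) f.1⟩, ⟨c' - Pi.single f.1 1 + Pi.single i 1, ?_, ?_⟩⟩
  · have := isMaxFeasible_countVec (s := insert f ((stair M c).erase e)) (by simpa using hB₁)
    rwa [countVec_insert fun h ↦ hf.2 (mem_coe.2 (mem_of_mem_erase h)),
      countVec_erase (by simpa using he.1), hcount] at this
  · have := isMaxFeasible_countVec (s := insert e ((stair M c').erase f)) (by simpa using hB₂)
    rwa [countVec_insert fun h ↦ he.2 (mem_coe.2 (mem_of_mem_erase h)),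
      countVec_erase (by simpa using hf.1), hcount'] at this
  · rw [natCast_sub_single_add_single (by omega)]
    abel

end MConvex

namespace Matroidal

variable {m : ℕ} (w : Matroidal m)

theorem v_union_le (S T : Finset (Fin m)) : w.v (S ∪ T) ≤ w.v S + T.card := by
  induction T using Finset.induction_on with
  | empty => simp
  | insert e T he ih =>
    rw [union_insert, card_insert_of_notMem he]
    linarith [w.marginal (S ∪ T) e]

theorem v_le_card (S : Finset (Fin m)) : w.v S ≤ S.card := by
  simpa [w.v_empty] using w.v_union_le ∅ S

theorem v_eq_card_of_subset {S T : Finset (Fin m)} (hS : w.v S = S.card) (hTS : T ⊆ S) :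
    w.v T = T.card := by
  have h := w.v_union_le T (S \ T)
  rw [union_sdiff_of_subset hTS, card_sdiff_of_subset hTS, hS] at h
  have := card_le_card hTS
  have := w.v_le_card T
  omega

theorem v_insert_eq_or (S : Finset (Fin m)) (e : Fin m) :
    w.v (insert e S) = w.v S ∨ w.v (insert e S) = w.v S + 1 := by
  have := w.marginal S e
  have := w.mono (subset_insert e S)
  omega

theorem v_insert_eq_of_subset {S T : Finset (Fin m)} (hST : S ⊆ T) {u : Fin m}
    (h : w.v (insert u S) = w.v S) : w.v (insert u T) = w.v T := by
  have hsub := w.submodular T (insert u S)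
  rw [union_insert, union_eq_left.2 hST, h] at hsub
  have := w.mono (subset_inter hST (subset_insert u S))
  have := w.mono (subset_insert u T)
  omega

theorem v_union_eq_of_forall_v_insert_eq {S T : Finset (Fin m)}
    (h : ∀ e ∈ T, w.v (insert e S) = w.v S) : w.v (S ∪ T) = w.v S := by
  induction T using Finset.induction_on with
  | empty => simp
  | insert e T he ih =>
    rw [union_insert, w.v_insert_eq_of_subset subset_union_left (h e (mem_insert_self e T)),
      ih fun x hx ↦ h x (mem_insert_of_mem hx)]

theorem exists_insert_v_eq_card {X Y : Finset (Fin m)} (hX : w.v X = X.card)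
    (hY : w.v Y = Y.card) (hXY : X.card < Y.card) :
    ∃ e ∈ Y, e ∉ X ∧ w.v (insert e X) = (insert e X).card := by
  by_contra! h
  have hspan : ∀ e ∈ Y, w.v (insert e X) = w.v X := by
    intro e he
    by_cases heX : e ∈ X
    · rw [insert_eq_self.2 heX]
    · have := h e he heX
      rw [card_insert_of_notMem heX] at this
      have := w.v_insert_eq_or X e
      omega
  have := w.v_union_eq_of_forall_v_insert_eq hspan
  have := w.mono (subset_union_right (s₁ := X) (s₂ := Y))
  omega

def toMatroid : Matroid (Fin m) :=
  (IndepMatroid.ofFinset Set.univ (fun I ↦ w.v I = I.card) (by rw [card_empty, w.v_empty])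
    (fun _ _ hJ hIJ ↦ w.v_eq_card_of_subset hJ hIJ) (fun _ _ ↦ w.exists_insert_v_eq_card)
    (fun _ _ ↦ Set.subset_univ _)).matroid

@[simp] theorem toMatroid_indep_iff {I : Finset (Fin m)} :
    w.toMatroid.Indep I ↔ w.v I = I.card := by
  rw [toMatroid, IndepMatroid.matroid_Indep, IndepMatroid.ofFinset_indep]

theorem exists_subset_v_eq_card (B : Finset (Fin m)) :
    ∃ Z ⊆ B, w.v Z = Z.card ∧ Z.card = w.v B := by
  obtain ⟨Z, hZ, hZmax⟩ := (B.powerset.filter fun Z ↦ w.v Z = Z.card).exists_max_image card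
    ⟨∅, by simp [w.v_empty]⟩
  rw [mem_filter, mem_powerset] at hZ
  refine ⟨Z, hZ.1, hZ.2, ?_⟩
  have hspan : ∀ e ∈ B, w.v (insert e Z) = w.v Z := by
    intro e he
    by_cases heZ : e ∈ Z
    · rw [insert_eq_self.2 heZ]
    · refine (w.v_insert_eq_or Z e).resolve_right fun h ↦ ?_
      have := hZmax (insert e Z) <| mem_filter.2 ⟨mem_powerset.2 (insert_subset he hZ.1),
        by rw [card_insert_of_notMem heZ, h, hZ.2]⟩
      rw [card_insert_of_notMem heZ] at this
      omega
  rw [← hZ.2, ← w.v_union_eq_of_forall_v_insert_eq hspan, union_eq_right.2 hZ.1]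


variable {n : ℕ} {P : Fin n → Matroidal m}

theorem isIndepAllocation_toMatroid_iff {A : Fin n → Finset (Fin m)} :
    IsIndepAllocation (fun i ↦ (P i).toMatroid) A ↔ IsAllocation A ∧ Clean P A := by
  simp [IsIndepAllocation, IsAllocation, Clean, Pairwise, onFun]

theorem isFeasible_v {B : Fin n → Finset (Fin m)} (hB : IsAllocation B) :
    IsFeasible (fun i ↦ (P i).toMatroid) (fun i ↦ (P i).v (B i)) := by
  choose Z hZB hZ hZv using fun i ↦ (P i).exists_subset_v_eq_card (B i)
  exact ⟨Z, isIndepAllocation_toMatroid_iff.2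
    ⟨fun i j hij ↦ (hB i j hij).mono (hZB i) (hZB j), hZ⟩, hZv⟩

theorem isMaxFeasible_iff_utilOpt {A : Fin n → Finset (Fin m)} (hA : IsAllocation A)
    (hC : Clean P A) :
    IsMaxFeasible (fun i ↦ (P i).toMatroid) (fun i ↦ (A i).card) ↔ UtilOpt P A := by
  have hsum : ∀ {X : Fin n → Finset (Fin m)}, Clean P X →
      ∑ i, (P i).v (X i) = ∑ i, (X i).card :=
    fun hX ↦ sum_congr rfl fun i _ ↦ hX i
  refine ⟨fun h ↦ ⟨hA, fun B hB ↦ hsum hC ▸ h.2 _ (isFeasible_v hB)⟩, fun h ↦ ⟨⟨A,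
    isIndepAllocation_toMatroid_iff.2 ⟨hA, hC⟩, fun _ ↦ rfl⟩, fun d ⟨Y, hY, hYd⟩ ↦ ?_⟩⟩
  rw [← hsum hC, ← funext hYd, ← hsum (isIndepAllocation_toMatroid_iff.1 hY).2]
  exact h.2 Y (isIndepAllocation_toMatroid_iff.1 hY).1

def fullAlloc (A : Fin n → Finset (Fin m)) : Option (Fin n) → Finset (Fin m) :=
  fun k ↦ k.elim (unalloc A) A

def withUnallocated (P : Fin n → Matroidal m) : Option (Fin n) → Matroid (Fin m) :=
  fun k ↦ k.elim (Matroid.freeOn Set.univ) fun i ↦ (P i).toMatroid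

theorem pairwise_disjoint_fullAlloc {A : Fin n → Finset (Fin m)} (hA : IsAllocation A) :
    Pairwise (Disjoint on fullAlloc A) := by
  have h : ∀ i, Disjoint (unalloc A) (A i) := fun i ↦
    disjoint_left.2 fun a ha hai ↦ (mem_sdiff.1 ha).2 (mem_biUnion.2 ⟨i, mem_univ i, hai⟩)
  rintro (_ | i) (_ | j) hij
  · exact absurd rfl hij
  · exact h j
  · exact (h i).symm
  · exact hA i j fun h ↦ hij (congrArg some h)

theorem sum_card_fullAlloc {A : Fin n → Finset (Fin m)} (hA : IsAllocation A) :
    ∑ k, (fullAlloc A k).card = m := by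
  calc ∑ k, (fullAlloc A k).card = (univ.biUnion (fullAlloc A)).card :=
        (card_biUnion fun k _ l _ hkl ↦ pairwise_disjoint_fullAlloc hA hkl).symm
    _ = (univ : Finset (Fin m)).card := congrArg card <| eq_univ_of_forall fun a ↦ by
        by_cases ha : a ∈ univ.biUnion A
        · obtain ⟨i, -, hi⟩ := mem_biUnion.1 ha
          exact mem_biUnion.2 ⟨some i, mem_univ _, hi⟩
        · exact mem_biUnion.2 ⟨none, mem_univ _, mem_sdiff.2 ⟨mem_univ a, ha⟩⟩
    _ = m := card_fin m

theorem isIndepAllocation_withUnallocated {A : Fin n → Finset (Fin m)} (hA : IsAllocation A)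
    (hC : Clean P A) : IsIndepAllocation (withUnallocated P) (fullAlloc A) := by
  refine ⟨pairwise_disjoint_fullAlloc hA, ?_⟩
  rintro (_ | i)
  · exact Matroid.freeOn_indep (Set.subset_univ _)
  · exact (toMatroid_indep_iff _).2 (hC i)

theorem fullAlloc_eq {X : Option (Fin n) → Finset (Fin m)} (hX : Pairwise (Disjoint on X))
    (hsum : ∑ k, (X k).card = m) : fullAlloc (fun i ↦ X (some i)) = X := by
  have hcover : univ.biUnion X = univ := by
    refine eq_univ_of_card _ ?_
    rw [card_biUnion fun k _ l _ hkl ↦ hX hkl, hsum, Fintype.card_fin]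
  ext (_ | i) a
  · simp only [fullAlloc, Option.elim, unalloc, mem_sdiff, mem_univ, true_and, mem_biUnion]
    constructor
    · intro ha
      obtain ⟨k, -, hk⟩ := mem_biUnion.1 (hcover ▸ mem_univ a)
      cases k with
      | none => exact hk
      | some i => exact absurd ⟨i, hk⟩ ha
    · rintro ha ⟨i, hi⟩
      exact disjoint_left.1 (hX (Option.some_ne_none i).symm) ha hi
  · rfl

theorem sizeVector_clean_iff (x : Option (Fin n) → ℤ) :
    (∃ A : Fin n → Finset (Fin m), IsAllocation A ∧ Clean P A ∧
      x none = ((unalloc A).card : ℤ) ∧ ∀ i : Fin n, x (some i) = ((A i).card : ℤ)) ↔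
    ∃ c, IsMaxFeasible (withUnallocated P) c ∧ (fun k ↦ (c k : ℤ)) = x := by
  have hmax : ∀ {c}, IsMaxFeasible (withUnallocated P) c ↔
      IsFeasible (withUnallocated P) c ∧ ∑ k, c k = Fintype.card (Fin m) :=
    isMaxFeasible_iff_of_sum_eq_card
      ⟨_, isIndepAllocation_withUnallocated (A := fun _ ↦ ∅) (fun _ _ _ ↦ disjoint_empty_left _)
        (fun i ↦ by simp [(P i).v_empty]), fun _ ↦ rfl⟩
      (by rw [sum_card_fullAlloc fun _ _ _ ↦ disjoint_empty_left _, Fintype.card_fin])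
  simp_rw [hmax, Fintype.card_fin]
  constructor
  · rintro ⟨A, hA, hC, hnone, hsome⟩
    refine ⟨_, ⟨⟨_, isIndepAllocation_withUnallocated hA hC, fun _ ↦ rfl⟩,
      sum_card_fullAlloc hA⟩, ?_⟩
    ext (_ | i)
    exacts [hnone.symm, (hsome i).symm]
  · rintro ⟨c, ⟨⟨X, hX, hXc⟩, hsum⟩, rfl⟩
    obtain rfl := funext hXc
    refine ⟨fun i ↦ X (some i), fun i j hij ↦ hX.1 (Option.some_injective _ |>.ne hij),
      fun i ↦ (toMatroid_indep_iff _).1 (hX.2 (some i)), ?_, fun _ ↦ rfl⟩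
    rw [← fullAlloc_eq hX.1 hsum]
    rfl

theorem sizeVector_cleanUtilOpt_iff (x : Fin n → ℤ) :
    (∃ A : Fin n → Finset (Fin m), Clean P A ∧ UtilOpt P A ∧ ∀ i, x i = ((A i).card : ℤ)) ↔
    ∃ c, IsMaxFeasible (fun i ↦ (P i).toMatroid) c ∧ (fun k ↦ (c k : ℤ)) = x := by
  constructor
  · rintro ⟨A, hC, hU, hx⟩
    exact ⟨_, (isMaxFeasible_iff_utilOpt hU.1 hC).2 hU, funext fun i ↦ (hx i).symm⟩
  · rintro ⟨c, hc, rfl⟩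
    obtain ⟨X, hX, hXc⟩ := hc.1
    obtain rfl := funext hXc
    obtain ⟨hA, hC⟩ := isIndepAllocation_toMatroid_iff.1 hX
    exact ⟨X, hC, (isMaxFeasible_iff_utilOpt hA hC).1 hc, fun _ ↦ rfl⟩

end Matroidal

/-- Lemma 3.5: both the set of size vectors (including the unallocated part `A_0`)
of clean allocations, and the set of size vectors of clean utilitarian optimal
allocations, are M-convex. -/
theorem sizeVectors_MConvex {n m : ℕ} (P : Fin n → Matroidal m) :
    MConvex {x : Option (Fin n) → ℤ |
        ∃ A : Fin n → Finset (Fin m), IsAllocation A ∧ Clean P A ∧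
          x none = ((unalloc A).card : ℤ) ∧ ∀ i : Fin n, x (some i) = ((A i).card : ℤ)} ∧
    MConvex {x : Fin n → ℤ |
        ∃ A : Fin n → Finset (Fin m), Clean P A ∧ UtilOpt P A ∧
          ∀ i : Fin n, x i = ((A i).card : ℤ)} := by
  simp_rw [Matroidal.sizeVector_clean_iff, Matroidal.sizeVector_cleanUtilOpt_iff]
  exact ⟨mConvex_setOf_isMaxFeasible _, mConvex_setOf_isMaxFeasible _⟩
end

section
/- For any profile of matroidal valuations and any agent i ∈ N, the difference max_{B∈cLD} |B_i| − min_{C∈cLD} |C_i| is either 0 or 1. -/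
open Finset

open scoped symmDiff

namespace Aux

variable {m : ℕ}

/-- Independence. -/
def Ind (w : Matroidal m) (S : Finset (Fin m)) : Prop := w.v S = S.card

lemma v_union_le (w : Matroidal m) (T U : Finset (Fin m)) :
    w.v (T ∪ U) ≤ w.v T + U.card := by
  classical
  induction U using Finset.induction with
  | empty => simpa using w.mono (Finset.union_subset (subset_refl T) (Finset.empty_subset T))
  | @insert a U hnotmem ih =>
    have h1 : T ∪ insert a U = insert a (T ∪ U) := by
      ext x; simp only [Finset.mem_insert, Finset.mem_union]; tauto
    calc w.v (T ∪ insert a U) = w.v (insert a (T ∪ U)) := by rw [h1]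
      _ ≤ w.v (T ∪ U) + 1 := w.marginal _ _
      _ ≤ w.v T + U.card + 1 := by omega
      _ ≤ w.v T + (insert a U).card := by
          rw [Finset.card_insert_of_notMem hnotmem]; omega

lemma v_le_card (w : Matroidal m) (S : Finset (Fin m)) : w.v S ≤ S.card := by
  have := v_union_le w ∅ S
  simpa [w.v_empty] using this

lemma ind_subset {w : Matroidal m} {S T : Finset (Fin m)} (hS : Ind w S) (hTS : T ⊆ S) :
    Ind w T := by
  have h1 : w.v S ≤ w.v T + (S \ T).card := by
    have := v_union_le w T (S \ T)
    rwa [Finset.union_sdiff_of_subset hTS] at this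
  have h2 : (S \ T).card = S.card - T.card := Finset.card_sdiff_of_subset hTS
  have h3 : T.card ≤ S.card := Finset.card_le_card hTS
  have h4 := v_le_card w T
  unfold Ind at hS ⊢
  omega

lemma spanning_union (w : Matroidal m) (I U : Finset (Fin m))
    (h : ∀ e ∈ U, w.v (insert e I) = w.v I) : w.v (I ∪ U) = w.v I := by
  classical
  induction U using Finset.induction with
  | empty => simp
  | @insert a U hnotmem ih =>
    have hU : ∀ e ∈ U, w.v (insert e I) = w.v I := fun e he => h e (Finset.mem_insert_of_mem he)
    have hIU : w.v (I ∪ U) = w.v I := ih hU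
    have ha' : w.v (insert a I) = w.v I := h a (Finset.mem_insert_self a U)
    have hsub := w.submodular (I ∪ U) (insert a I)
    have h1 : (I ∪ U) ∪ insert a I = insert a (I ∪ U) := by
      ext x; simp only [Finset.mem_insert, Finset.mem_union]; tauto
    have h2 : I ⊆ (I ∪ U) ∩ insert a I := by
      intro x hx; simp [Finset.mem_inter, Finset.mem_union, Finset.mem_insert]; tauto
    have h3 : w.v I ≤ w.v ((I ∪ U) ∩ insert a I) := w.mono h2
    have h4 : w.v (insert a (I ∪ U)) ≥ w.v I := w.mono (by
      intro x hx; simp only [Finset.mem_insert, Finset.mem_union]; tauto)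
    have h5 : I ∪ insert a U = insert a (I ∪ U) := by
      ext x; simp only [Finset.mem_insert, Finset.mem_union]; tauto
    rw [h5]
    rw [h1] at hsub
    omega

lemma ind_aug {w : Matroidal m} {I J : Finset (Fin m)} (hI : Ind w I) (hJ : Ind w J)
    (hcard : I.card < J.card) : ∃ e ∈ J, e ∉ I ∧ Ind w (insert e I) := by
  classical
  by_contra hcon
  push_neg at hcon
  have hall : ∀ e ∈ J \ I, w.v (insert e I) = w.v I := by
    intro e he
    rw [Finset.mem_sdiff] at he
    have h1 := hcon e he.1 he.2
    have h2 := w.marginal I e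
    have h3 : w.v I ≤ w.v (insert e I) := w.mono (Finset.subset_insert e I)
    have h4 : (insert e I).card = I.card + 1 := Finset.card_insert_of_notMem he.2
    unfold Ind at hI h1
    omega
  have hspan := spanning_union w I (J \ I) hall
  have hJsub : J ⊆ I ∪ (J \ I) := by
    intro x hx
    simp only [Finset.mem_union, Finset.mem_sdiff]
    tauto
  have := w.mono hJsub
  unfold Ind at hI hJ
  omega

lemma ind_exists_subset {w : Matroidal m} {S : Finset (Fin m)} (hS : Ind w S) (k : ℕ)
    (hk : k ≤ S.card) : ∃ T ⊆ S, T.card = k ∧ Ind w T := by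
  obtain ⟨T, hT, hcard⟩ := Finset.exists_subset_card_eq hk
  exact ⟨T, hT, hcard, ind_subset hS hT⟩

end Aux
open scoped symmDiff

namespace Aux

variable {n m : ℕ}

def GoodAlloc (P : Fin n → Matroidal m) (X : Fin n → Finset (Fin m)) : Prop :=
  IsAllocation X ∧ ∀ l, Ind (P l) (X l)

/-- Dissimilarity measure. -/
def Dsum (X Y : Fin n → Finset (Fin m)) : ℕ := ∑ l, ((X l) ∆ (Y l)).card

variable {P : Fin n → Matroidal m}

lemma good_add {X : Fin n → Finset (Fin m)} (hX : GoodAlloc P X) {p : Fin n} {e : Fin m}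
    (hfree : ∀ l, e ∉ X l) (hind : Ind (P p) (insert e (X p))) :
    GoodAlloc P (Function.update X p (insert e (X p))) := by
  classical
  constructor
  · intro i j hij
    have hd := hX.1 i j hij
    by_cases hi : i = p <;> by_cases hj : j = p
    · exact absurd (hi.trans hj.symm) hij
    · subst hi
      simp only [Function.update_self, Function.update_of_ne hj]
      rw [Finset.disjoint_insert_left]
      exact ⟨hfree j, hd⟩
    · subst hj
      simp only [Function.update_self, Function.update_of_ne hi]
      rw [Finset.disjoint_insert_right]
      exact ⟨hfree i, hd⟩
    · simp only [Function.update_of_ne hi, Function.update_of_ne hj]; exact hd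
  · intro l
    by_cases hl : l = p
    · subst hl; simpa using hind
    · simpa [Function.update_of_ne hl] using hX.2 l

lemma good_move {X : Fin n → Finset (Fin m)} (hX : GoodAlloc P X) {p q : Fin n} {e : Fin m}
    (hpq : q ≠ p) (he : e ∈ X q) (hind : Ind (P p) (insert e (X p))) :
    GoodAlloc P (Function.update (Function.update X q ((X q).erase e)) p (insert e (X p))) := by
  classical
  have henp : e ∉ X p := by
    intro hc
    exact (Finset.disjoint_left.mp (hX.1 q p hpq) he) hc
  constructor
  · intro i j hij
    have hd := hX.1 i j hij
    by_cases hi : i = p <;> by_cases hj : j = p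
    · exact absurd (hi.trans hj.symm) hij
    · subst hi
      simp only [Function.update_self, Function.update_of_ne hj]
      by_cases hjq : j = q
      · subst hjq
        simp only [Function.update_self]
        rw [Finset.disjoint_insert_left]
        exact ⟨Finset.notMem_erase e _, hd.mono_right (Finset.erase_subset e _)⟩
      · simp only [Function.update_of_ne hjq]
        rw [Finset.disjoint_insert_left]
        exact ⟨fun hc => (Finset.disjoint_left.mp (hX.1 q j (fun h => hjq h.symm)) he) hc, hd⟩
    · subst hj
      simp only [Function.update_self, Function.update_of_ne hi]
      by_cases hiq : i = q
      · subst hiq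
        simp only [Function.update_self]
        rw [Finset.disjoint_insert_right]
        exact ⟨Finset.notMem_erase e _, hd.mono_left (Finset.erase_subset e _)⟩
      · simp only [Function.update_of_ne hiq]
        rw [Finset.disjoint_insert_right]
        exact ⟨fun hc => (Finset.disjoint_left.mp (hX.1 q i (fun h => hiq h.symm)) he) hc, hd⟩
    · simp only [Function.update_of_ne hi, Function.update_of_ne hj]
      by_cases hiq : i = q <;> by_cases hjq : j = q
      · exact absurd (hiq.trans hjq.symm) hij
      · subst hiq
        simp only [Function.update_self, Function.update_of_ne hjq]
        exact hd.mono_left (Finset.erase_subset e _)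
      · subst hjq
        simp only [Function.update_self, Function.update_of_ne hiq]
        exact hd.mono_right (Finset.erase_subset e _)
      · simp only [Function.update_of_ne hiq, Function.update_of_ne hjq]; exact hd
  · intro l
    by_cases hl : l = p
    · subst hl; simpa using hind
    · by_cases hlq : l = q
      · subst hlq
        simp only [Function.update_of_ne hl, Function.update_self]
        exact ind_subset (hX.2 l) (Finset.erase_subset e _)
      · simp only [Function.update_of_ne hl, Function.update_of_ne hlq]
        exact hX.2 l

lemma symmDiff_insert {X Y : Finset (Fin m)} {e : Fin m} (heY : e ∈ Y) (heX : e ∉ X) :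
    (insert e X) ∆ Y = (X ∆ Y).erase e := by
  ext a
  simp only [Finset.mem_symmDiff, Finset.mem_insert, Finset.mem_erase]
  constructor
  · rintro (⟨(rfl | ha), hnY⟩ | ⟨haY, hn⟩)
    · exact absurd heY hnY
    · refine ⟨fun hc => (hc ▸ hnY) heY, Or.inl ⟨ha, hnY⟩⟩
    · exact ⟨fun hc => hn (Or.inl hc), Or.inr ⟨haY, fun hc => hn (Or.inr hc)⟩⟩
  · rintro ⟨hne, (⟨haX, hnY⟩ | ⟨haY, hnX⟩)⟩
    · exact Or.inl ⟨Or.inr haX, hnY⟩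
    · exact Or.inr ⟨haY, fun hc => by rcases hc with rfl | hc; exact hne rfl; exact hnX hc⟩

lemma symmDiff_erase {X Y : Finset (Fin m)} {e : Fin m} (heX : e ∈ X) (heY : e ∉ Y) :
    (X.erase e) ∆ Y = (X ∆ Y).erase e := by
  ext a
  simp only [Finset.mem_symmDiff, Finset.mem_erase]
  constructor
  · rintro (⟨⟨hne, haX⟩, hnY⟩ | ⟨haY, hn⟩)
    · exact ⟨hne, Or.inl ⟨haX, hnY⟩⟩
    · refine ⟨fun hc => (hc ▸ heY) haY, Or.inr ⟨haY, fun hc => hn ⟨fun h => (h ▸ heY) haY, hc⟩⟩⟩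
  · rintro ⟨hne, (⟨haX, hnY⟩ | ⟨haY, hnX⟩)⟩
    · exact Or.inl ⟨⟨hne, haX⟩, hnY⟩
    · exact Or.inr ⟨haY, fun hc => hnX hc.2⟩

/-- The chain/transfer lemma: augmenting `X` at agent `i` towards certificate `Y`. -/
lemma inc_aux (P : Fin n → Matroidal m) :
    ∀ (D : ℕ) (X Y : Fin n → Finset (Fin m)) (i : Fin n),
    GoodAlloc P X → GoodAlloc P Y → Dsum X Y ≤ D → (X i).card < (Y i).card →
    ∃ X', GoodAlloc P X' ∧ (X' i).card = (X i).card + 1 ∧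
      ((∀ l, l ≠ i → (X' l).card = (X l).card) ∨
       ∃ j, j ≠ i ∧ (Y j).card < (X j).card ∧ (X' j).card + 1 = (X j).card ∧
         ∀ l, l ≠ i → l ≠ j → (X' l).card = (X l).card) := by
  classical
  intro D
  induction D with
  | zero =>
    intro X Y i hX hY hD hlt
    exfalso
    have h0 : ((X i) ∆ (Y i)).card = 0 := by
      have : ((X i) ∆ (Y i)).card ≤ Dsum X Y :=
        Finset.single_le_sum (f := fun l => ((X l) ∆ (Y l)).card) (fun _ _ => Nat.zero_le _)
          (Finset.mem_univ i)
      omega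
    have : (X i) ∆ (Y i) = ∅ := Finset.card_eq_zero.mp h0
    have hXY : X i = Y i := by
      rw [← Finset.bot_eq_empty, symmDiff_eq_bot] at this
      exact this
    rw [hXY] at hlt
    omega
  | succ D ih =>
    intro X Y i hX hY hD hlt
    obtain ⟨e, heY, heX, hind⟩ := ind_aug (hX.2 i) (hY.2 i) hlt
    by_cases hfree : ∀ l, e ∉ X l
    · refine ⟨Function.update X i (insert e (X i)), good_add hX hfree hind, ?_, Or.inl ?_⟩
      · simp [Finset.card_insert_of_notMem heX]
      · intro l hl; simp [Function.update_of_ne hl]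
    · push_neg at hfree
      obtain ⟨q, heq⟩ := hfree
      have hqi : q ≠ i := fun hc => heX (hc ▸ heq)
      have heYq : e ∉ Y q := fun hc =>
        (Finset.disjoint_left.mp (hY.1 i q (Ne.symm hqi)) heY) hc
      set X1 := Function.update (Function.update X q ((X q).erase e)) i (insert e (X i))
        with hX1def
      have hgood1 : GoodAlloc P X1 := good_move hX hqi heq hind
      have hX1i : X1 i = insert e (X i) := by simp [hX1def]
      have hX1q : X1 q = (X q).erase e := by
        simp [hX1def, Function.update_of_ne hqi]
      have hX1l : ∀ l, l ≠ i → l ≠ q → X1 l = X l := by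
        intro l hl hlq
        simp [hX1def, Function.update_of_ne hl, Function.update_of_ne hlq]
      have hcardi : (X1 i).card = (X i).card + 1 := by
        rw [hX1i, Finset.card_insert_of_notMem heX]
      have hcardq : (X1 q).card + 1 = (X q).card := by
        rw [hX1q, Finset.card_erase_of_mem heq]
        have : 0 < (X q).card := Finset.card_pos.mpr ⟨e, heq⟩
        omega
      have hDsum : Dsum X1 Y ≤ D := by
        have hlt2 : Dsum X1 Y < Dsum X Y := by
          apply Finset.sum_lt_sum
          · intro l _
            by_cases hli : l = i
            · subst hli
              rw [hX1i, symmDiff_insert heY heX]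
              exact Finset.card_le_card (Finset.erase_subset e _)
            · by_cases hlq : l = q
              · subst hlq
                rw [hX1q, symmDiff_erase heq heYq]
                exact Finset.card_le_card (Finset.erase_subset e _)
              · rw [hX1l l hli hlq]
          · refine ⟨i, Finset.mem_univ i, ?_⟩
            rw [hX1i, symmDiff_insert heY heX]
            apply Finset.card_erase_lt_of_mem
            rw [Finset.mem_symmDiff]
            exact Or.inr ⟨heY, heX⟩
        omega
      by_cases hstop : (Y q).card < (X q).card
      · refine ⟨X1, hgood1, hcardi, Or.inr ⟨q, hqi, hstop, hcardq, ?_⟩⟩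
        intro l hl hlq
        rw [hX1l l hl hlq]
      · push_neg at hstop
        have hlt' : (X1 q).card < (Y q).card := by omega
        obtain ⟨X2, hgood2, hcard2, hdisj⟩ := ih X1 Y q hgood1 hY hDsum hlt'
        rcases hdisj with hleft | ⟨j2, hj2q, hj2Y, hj2card, hrest⟩
        · refine ⟨X2, hgood2, ?_, Or.inl ?_⟩
          · rw [hleft i (Ne.symm hqi), hcardi]
          · intro l hl
            by_cases hlq : l = q
            · subst hlq; omega
            · rw [hleft l hlq, hX1l l hl hlq]
        · have hj2i : j2 ≠ i := by
            intro hc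
            subst hc
            omega
          refine ⟨X2, hgood2, ?_, Or.inr ⟨j2, hj2i, ?_, ?_, ?_⟩⟩
          · rw [hrest i (Ne.symm hqi) (Ne.symm hj2i), hcardi]
          · rwa [hX1l j2 hj2i hj2q] at hj2Y
          · rwa [hX1l j2 hj2i hj2q] at hj2card
          · intro l hl hlj2
            by_cases hlq : l = q
            · subst hlq; omega
            · rw [hrest l hlq hlj2, hX1l l hl hlq]

end Aux
namespace Aux

variable {n m : ℕ}

def Vset (P : Fin n → Matroidal m) : Set (Fin n → ℕ) :=
  {x | ∃ X, GoodAlloc P X ∧ ∀ l, (X l).card = x l}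

variable {P : Fin n → Matroidal m}

lemma Vset_down {x y : Fin n → ℕ} (hx : x ∈ Vset P) (h : ∀ l, y l ≤ x l) : y ∈ Vset P := by
  classical
  obtain ⟨X, hX, hXcard⟩ := hx
  have hle : ∀ l, y l ≤ (X l).card := fun l => (hXcard l) ▸ h l
  choose T hT hTcard using fun l => Finset.exists_subset_card_eq (hle l)
  refine ⟨T, ⟨?_, ?_⟩, hTcard⟩
  · intro i j hij
    exact (hX.1 i j hij).mono (hT i) (hT j)
  · intro l
    exact ind_subset (hX.2 l) (hT l)

lemma Vset_aug : ∀ (E : ℕ) (x y : Fin n → ℕ), x ∈ Vset P → y ∈ Vset P →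
    (∑ l, (x l - y l)) ≤ E → (∑ l, x l) < (∑ l, y l) →
    ∃ p, x p < y p ∧ Function.update x p (x p + 1) ∈ Vset P := by
  classical
  intro E
  induction E with
  | zero =>
    intro x y hx hy hE hsum
    obtain ⟨p, -, hp⟩ := Finset.exists_lt_of_sum_lt hsum
    refine ⟨p, hp, Vset_down hy ?_⟩
    intro l
    have hall : ∀ q : Fin n, x q - y q = 0 := by
      intro q
      have : x q - y q ≤ ∑ l, (x l - y l) :=
        Finset.single_le_sum (f := fun l => x l - y l) (fun _ _ => Nat.zero_le _)
          (Finset.mem_univ q)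
      omega
    have := hall l
    by_cases hl : l = p
    · subst hl; simp [Function.update_self]; omega
    · rw [Function.update_of_ne hl]; omega
  | succ E ih =>
    intro x y hx hy hE hsum
    by_cases hex : ∃ q, y q < x q
    · obtain ⟨q, hq⟩ := hex
      obtain ⟨Y, hY, hYcard⟩ := id hy
      obtain ⟨X, hX, hXcard⟩ := id hx
      have hlt : (Y q).card < (X q).card := by rw [hYcard q, hXcard q]; exact hq
      obtain ⟨Y', hY', hcardq, hdisj⟩ :=
        inc_aux P (Dsum Y X) Y X q hY hX le_rfl hlt
      set y' : Fin n → ℕ := fun l => (Y' l).card with hy'def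
      have hy' : y' ∈ Vset P := ⟨Y', hY', fun l => rfl⟩
      have hy'q : y' q = y q + 1 := by
        rw [hy'def]; simp only []; rw [hcardq, hYcard q]
      rcases hdisj with hleft | ⟨j, hjq, hjlt, hjcard, hrest⟩
      · have hy'l : ∀ l, l ≠ q → y' l = y l := by
          intro l hl
          rw [hy'def]; simp only []; rw [hleft l hl, hYcard l]
        have hkey : (∑ l, (x l - y' l)) + 1 = ∑ l, (x l - y l) := by
          have hpt : ∀ l ∈ Finset.univ, (x l - y' l) + (if l = q then 1 else 0)
              = x l - y l := by
            intro l _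
            by_cases hl : l = q
            · subst hl; rw [hy'q]; simp; omega
            · rw [hy'l l hl]; simp [hl]
          calc (∑ l, (x l - y' l)) + 1
              = ∑ l, ((x l - y' l) + (if l = q then 1 else 0)) := by
                rw [Finset.sum_add_distrib, Finset.sum_ite_eq' Finset.univ q (fun _ => 1)]
                simp
            _ = ∑ l, (x l - y l) := Finset.sum_congr rfl hpt
        have hsums : (∑ l, x l) < ∑ l, y' l := by
          have : (∑ l, y' l) = (∑ l, y l) + 1 := by
            have hpt : ∀ l ∈ Finset.univ, y' l = y l + (if l = q then 1 else 0) := by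
              intro l _
              by_cases hl : l = q
              · subst hl; rw [hy'q]; simp
              · rw [hy'l l hl]; simp [hl]
            rw [Finset.sum_congr rfl hpt, Finset.sum_add_distrib,
              Finset.sum_ite_eq' Finset.univ q (fun _ => 1)]
            simp
          omega
        obtain ⟨p, hplt, hpV⟩ := ih x y' hx hy' (by omega) hsums
        refine ⟨p, ?_, hpV⟩
        by_cases hp : p = q
        · subst hp; rw [hy'q] at hplt; omega
        · rwa [hy'l p hp] at hplt
      · have hxjyj : x j < y j := by rw [← hYcard j, ← hXcard j]; exact hjlt
        have hy'j : y' j + 1 = y j := by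
          rw [hy'def]; simp only []; rw [hjcard, hYcard j]
        have hy'l : ∀ l, l ≠ q → l ≠ j → y' l = y l := by
          intro l hl hlj
          rw [hy'def]; simp only []; rw [hrest l hl hlj, hYcard l]
        have hkey : (∑ l, (x l - y' l)) + 1 = ∑ l, (x l - y l) := by
          have hpt : ∀ l ∈ Finset.univ, (x l - y' l) + (if l = q then 1 else 0)
              = x l - y l := by
            intro l _
            by_cases hl : l = q
            · subst hl; rw [hy'q]; simp; omega
            · by_cases hlj : l = j
              · subst hlj; simp [hl]; omega
              · rw [hy'l l hl hlj]; simp [hl]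
          calc (∑ l, (x l - y' l)) + 1
              = ∑ l, ((x l - y' l) + (if l = q then 1 else 0)) := by
                rw [Finset.sum_add_distrib, Finset.sum_ite_eq' Finset.univ q (fun _ => 1)]
                simp
            _ = ∑ l, (x l - y l) := Finset.sum_congr rfl hpt
        have hsums : (∑ l, x l) < ∑ l, y' l := by
          have : (∑ l, y' l) = (∑ l, y l) := by
            have hpt : ∀ l ∈ Finset.univ, y' l + (if l = j then 1 else 0)
                = y l + (if l = q then 1 else 0) := by
              intro l _
              by_cases hl : l = q
              · subst hl; rw [hy'q]; simp [Ne.symm hjq]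
              · by_cases hlj : l = j
                · subst hlj; simp [hl]; omega
                · rw [hy'l l hl hlj]; simp [hl, hlj]
            have := Finset.sum_congr rfl hpt
            rw [Finset.sum_add_distrib, Finset.sum_add_distrib,
              Finset.sum_ite_eq' Finset.univ q (fun _ => 1),
              Finset.sum_ite_eq' Finset.univ j (fun _ => 1)] at this
            simp at this
            omega
          omega
        obtain ⟨p, hplt, hpV⟩ := ih x y' hx hy' (by omega) hsums
        refine ⟨p, ?_, hpV⟩
        by_cases hp : p = q
        · subst hp; rw [hy'q] at hplt; omega
        · by_cases hpj : p = j
          · subst hpj; omega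
          · rwa [hy'l p hp hpj] at hplt
    · push_neg at hex
      obtain ⟨p, -, hp⟩ := Finset.exists_lt_of_sum_lt hsum
      refine ⟨p, hp, Vset_down hy ?_⟩
      intro l
      by_cases hl : l = p
      · subst hl; simp [Function.update_self]; omega
      · rw [Function.update_of_ne hl]; exact hex l

end Aux
namespace Aux

section Brualdi

variable {Ω : Type*} [DecidableEq Ω] [Fintype Ω]
variable (CI : Finset Ω → Prop) [DecidablePred CI]

/-- rank of the independence system. -/
def rnk (Z : Finset Ω) : ℕ := ((Z.powerset).filter CI).sup Finset.card

variable {CI}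

lemma rnk_le {I Z : Finset Ω} (hI : CI I) (hIZ : I ⊆ Z) : I.card ≤ rnk CI Z :=
  Finset.le_sup (Finset.mem_filter.mpr ⟨Finset.mem_powerset.mpr hIZ, hI⟩)

lemma exists_rnk (h0 : CI ∅) (Z : Finset Ω) : ∃ I, I ⊆ Z ∧ CI I ∧ I.card = rnk CI Z := by
  have hne : ((Z.powerset).filter CI).Nonempty :=
    ⟨∅, Finset.mem_filter.mpr ⟨Finset.mem_powerset.mpr (Finset.empty_subset Z), h0⟩⟩
  obtain ⟨I, hmem, heq⟩ := Finset.exists_mem_eq_sup _ hne Finset.card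
  rw [Finset.mem_filter, Finset.mem_powerset] at hmem
  exact ⟨I, hmem.1, hmem.2, heq.symm⟩

lemma rnk_card_le (Z : Finset Ω) : rnk CI Z ≤ Z.card := by
  apply Finset.sup_le
  intro I hI
  rw [Finset.mem_filter, Finset.mem_powerset] at hI
  exact Finset.card_le_card hI.1

lemma rnk_mono {Z Z' : Finset Ω} (h : Z ⊆ Z') : rnk CI Z ≤ rnk CI Z' := by
  apply Finset.sup_le
  intro I hI
  rw [Finset.mem_filter, Finset.mem_powerset] at hI
  exact rnk_le hI.2 (hI.1.trans h)

lemma rnk_extend (h0 : CI ∅)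
    (haug : ∀ {S T : Finset Ω}, CI S → CI T → S.card < T.card →
      ∃ a ∈ T, a ∉ S ∧ CI (insert a S)) :
    ∀ (k : ℕ) (Z I : Finset Ω), CI I → I ⊆ Z → rnk CI Z ≤ I.card + k →
    ∃ J, I ⊆ J ∧ J ⊆ Z ∧ CI J ∧ J.card = rnk CI Z := by
  intro k
  induction k with
  | zero =>
    intro Z I hI hIZ hk
    exact ⟨I, subset_refl I, hIZ, hI, le_antisymm (rnk_le hI hIZ) (by omega)⟩
  | succ k ih =>
    intro Z I hI hIZ hk
    by_cases hcard : rnk CI Z ≤ I.card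
    · exact ⟨I, subset_refl I, hIZ, hI, le_antisymm (rnk_le hI hIZ) hcard⟩
    · push_neg at hcard
      obtain ⟨M, hMZ, hM, hMcard⟩ := exists_rnk h0 Z
      obtain ⟨a, haM, haI, hins⟩ := haug hI hM (by omega)
      obtain ⟨J, hJ1, hJ2, hJ3, hJ4⟩ := ih Z (insert a I) hins
        (Finset.insert_subset (hMZ haM) hIZ)
        (by rw [Finset.card_insert_of_notMem haI]; omega)
      exact ⟨J, (Finset.subset_insert a I).trans hJ1, hJ2, hJ3, hJ4⟩

lemma rnk_insert_le (hsub : ∀ {S T : Finset Ω}, CI S → T ⊆ S → CI T)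
    (h0 : CI ∅) (a : Ω) (Z : Finset Ω) : rnk CI (insert a Z) ≤ rnk CI Z + 1 := by
  obtain ⟨J, hJZ, hJ, hJcard⟩ := exists_rnk h0 (insert a Z)
  have h1 : CI (J.erase a) := hsub hJ (Finset.erase_subset a J)
  have h2 : J.erase a ⊆ Z := by
    intro x hx
    rw [Finset.mem_erase] at hx
    rcases Finset.mem_insert.mp (hJZ hx.2) with h | h
    · exact absurd h hx.1
    · exact h
  have h3 := rnk_le h1 h2
  have h4 : J.card ≤ (J.erase a).card + 1 := by
    by_cases ha : a ∈ J
    · rw [Finset.card_erase_of_mem ha]; omega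
    · rw [Finset.erase_eq_of_notMem ha]; omega
  omega

/-- marginal monotonicity: if `a` adds nothing to `X ⊆ Z` then it adds nothing to `Z`. -/
lemma rnk_marginal (h0 : CI ∅) (hsub : ∀ {S T : Finset Ω}, CI S → T ⊆ S → CI T)
    (haug : ∀ {S T : Finset Ω}, CI S → CI T → S.card < T.card →
      ∃ a ∈ T, a ∉ S ∧ CI (insert a S))
    {X Z : Finset Ω} {a : Ω} (hXZ : X ⊆ Z) (hX : rnk CI (insert a X) = rnk CI X) :
    rnk CI (insert a Z) = rnk CI Z := by
  refine le_antisymm ?_ (rnk_mono (Finset.subset_insert a Z))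
  by_contra hcon
  push_neg at hcon
  have hzins : rnk CI Z + 1 ≤ rnk CI (insert a Z) := hcon
  -- max independent I in X, extended to J in Z, then a K of bigger size in insert a Z
  obtain ⟨I, hIX, hI, hIcard⟩ := exists_rnk h0 X
  obtain ⟨J, hIJ, hJZ, hJ, hJcard⟩ := rnk_extend h0 haug (rnk CI Z) Z I hI (hIX.trans hXZ)
    (by omega)
  obtain ⟨K, hKZ, hK, hKcard⟩ := exists_rnk h0 (insert a Z)
  obtain ⟨b, hbK, hbJ, hbins⟩ := haug hJ hK (by omega)
  have hbZ : b = a := by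
    by_contra hba
    have hbZ' : b ∈ Z := by
      rcases Finset.mem_insert.mp (hKZ hbK) with h | h
      · exact absurd h hba
      · exact h
    have : J.card + 1 ≤ rnk CI Z := by
      have := rnk_le hbins (Finset.insert_subset hbZ' hJZ)
      rwa [Finset.card_insert_of_notMem hbJ] at this
    omega
  subst hbZ
  have hIb : CI (insert b I) := hsub hbins (Finset.insert_subset_insert b hIJ)
  have hIbcard : (insert b I).card = I.card + 1 :=
    Finset.card_insert_of_notMem (fun hc => hbJ (hIJ hc))
  have : I.card + 1 ≤ rnk CI (insert b X) := by
    have := rnk_le hIb (Finset.insert_subset_insert b hIX)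
    omega
  omega

lemma rnk_spanning (h0 : CI ∅) (hsub : ∀ {S T : Finset Ω}, CI S → T ⊆ S → CI T)
    (haug : ∀ {S T : Finset Ω}, CI S → CI T → S.card < T.card →
      ∃ a ∈ T, a ∉ S ∧ CI (insert a S))
    {X : Finset Ω} (U : Finset Ω) (h : ∀ b ∈ U, rnk CI (insert b X) = rnk CI X) :
    rnk CI (X ∪ U) = rnk CI X := by
  classical
  induction U using Finset.induction with
  | empty => simp
  | @insert c U hc ih =>
    have hU : rnk CI (X ∪ U) = rnk CI X :=
      ih (fun b hb => h b (Finset.mem_insert_of_mem hb))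
    have hXU : X ⊆ X ∪ U := Finset.subset_union_left
    have := rnk_marginal h0 hsub haug hXU (h c (Finset.mem_insert_self c U))
    have heq : X ∪ insert c U = insert c (X ∪ U) := by
      ext x; simp only [Finset.mem_insert, Finset.mem_union]; tauto
    rw [heq, this, hU]

/-- The fundamental-circuit fact: `insert ξ K` is dependent, where `K` consists of the
elements of the base `T` that can be exchanged for `ξ`. -/
lemma fundamental_dep (h0 : CI ∅) (hsub : ∀ {S T : Finset Ω}, CI S → T ⊆ S → CI T)
    (haug : ∀ {S T : Finset Ω}, CI S → CI T → S.card < T.card →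
      ∃ a ∈ T, a ∉ S ∧ CI (insert a S))
    {T : Finset Ω} {ξ : Ω} (hT : CI T) (hξT : ξ ∉ T)
    (hTmax : T.card = rnk CI Finset.univ) :
    ¬ CI (insert ξ (T.filter (fun η => CI (insert ξ (T.erase η))))) := by
  intro hcon
  set K := T.filter (fun η => CI (insert ξ (T.erase η))) with hKdef
  have hKT : K ⊆ T := Finset.filter_subset _ T
  have hiKT : insert ξ K ⊆ insert ξ T := Finset.insert_subset_insert ξ hKT
  have hrT : rnk CI (insert ξ T) = T.card := by
    refine le_antisymm ?_ ?_
    · rw [hTmax]; exact rnk_mono (Finset.subset_univ _)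
    · exact rnk_le hT (Finset.subset_insert ξ T)
  obtain ⟨J, hKJ, hJT, hJ, hJcard⟩ := rnk_extend h0 haug (rnk CI (insert ξ T))
    (insert ξ T) (insert ξ K) hcon hiKT (by omega)
  have hcardJ : J.card = T.card := by rw [hJcard, hrT]
  have hsd : ((insert ξ T) \ J).card = 1 := by
    rw [Finset.card_sdiff_of_subset hJT, Finset.card_insert_of_notMem hξT, hcardJ]
    omega
  obtain ⟨η₀, hη₀⟩ := Finset.card_eq_one.mp hsd
  have hη₀mem : η₀ ∈ insert ξ T ∧ η₀ ∉ J := by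
    have : η₀ ∈ (insert ξ T) \ J := hη₀ ▸ Finset.mem_singleton_self η₀
    rw [Finset.mem_sdiff] at this
    exact this
  have hη₀ξ : η₀ ≠ ξ := by
    intro hc
    exact hη₀mem.2 (hKJ (hc ▸ Finset.mem_insert_self ξ K))
  have hη₀T : η₀ ∈ T := by
    rcases Finset.mem_insert.mp hη₀mem.1 with h | h
    · exact absurd h hη₀ξ
    · exact h
  -- J = insert ξ (T.erase η₀)
  have hJeq : J = insert ξ (T.erase η₀) := by
    apply Finset.eq_of_subset_of_card_le
    · intro x hx
      have hxT := hJT hx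
      have hxη₀ : x ≠ η₀ := fun hc => hη₀mem.2 (hc ▸ hx)
      rcases Finset.mem_insert.mp hxT with h | h
      · rw [h]; exact Finset.mem_insert_self ξ _
      · exact Finset.mem_insert_of_mem (Finset.mem_erase.mpr ⟨hxη₀, h⟩)
    · rw [Finset.card_insert_of_notMem (fun hc => hξT (Finset.mem_of_mem_erase hc)),
        Finset.card_erase_of_mem hη₀T, hcardJ]
      have : 0 < T.card := Finset.card_pos.mpr ⟨η₀, hη₀T⟩
      omega
  have : η₀ ∈ K := by
    rw [hKdef, Finset.mem_filter]
    exact ⟨hη₀T, hJeq ▸ hJ⟩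
  exact hη₀mem.2 (hKJ (Finset.mem_insert_of_mem this))

/-- Brualdi's symmetric basis exchange. -/
lemma brualdi_exchange (h0 : CI ∅) (hsub : ∀ {S T : Finset Ω}, CI S → T ⊆ S → CI T)
    (haug : ∀ {S T : Finset Ω}, CI S → CI T → S.card < T.card →
      ∃ a ∈ T, a ∉ S ∧ CI (insert a S))
    {S T : Finset Ω} {ξ : Ω} (hS : CI S) (hT : CI T)
    (hSmax : S.card = rnk CI Finset.univ) (hTmax : T.card = rnk CI Finset.univ)
    (hξS : ξ ∈ S) (hξT : ξ ∉ T) :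
    ∃ η ∈ T, η ∉ S ∧ CI (insert η (S.erase ξ)) ∧ CI (insert ξ (T.erase η)) := by
  set K := T.filter (fun η => CI (insert ξ (T.erase η))) with hKdef
  set S₀ := S.erase ξ with hS₀def
  have hS₀ : CI S₀ := hsub hS (Finset.erase_subset ξ S)
  have hS₀card : S₀.card + 1 = S.card := by
    rw [hS₀def, Finset.card_erase_of_mem hξS]
    have : 0 < S.card := Finset.card_pos.mpr ⟨ξ, hξS⟩
    omega
  have hrS₀ : rnk CI S₀ = S₀.card :=
    le_antisymm (rnk_card_le S₀) (rnk_le hS₀ (subset_refl S₀))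
  have hmain : ∃ η ∈ K, rnk CI (insert η S₀) ≠ rnk CI S₀ := by
    by_contra hcon
    push_neg at hcon
    have hsp : rnk CI (S₀ ∪ K) = rnk CI S₀ := rnk_spanning h0 hsub haug K hcon
    -- insert ξ K is dependent, so the rank of K ∪ {ξ} equals rnk K
    have hKind : CI K := hsub hT (Finset.filter_subset _ T)
    have hrK : rnk CI (insert ξ K) = rnk CI K := by
      refine le_antisymm ?_ (rnk_mono (Finset.subset_insert ξ K))
      have hKcard : rnk CI K = K.card :=
        le_antisymm (rnk_card_le K) (rnk_le hKind (subset_refl K))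
      by_contra hcon2
      push_neg at hcon2
      obtain ⟨I, hIZ, hI, hIcard⟩ := exists_rnk h0 (insert ξ K)
      have hIcard' : I.card = (insert ξ K).card := by
        have h1 : rnk CI (insert ξ K) ≤ rnk CI K + 1 := rnk_insert_le hsub h0 ξ K
        have h2 : (insert ξ K).card = K.card + 1 :=
          Finset.card_insert_of_notMem (fun hc => hξT (Finset.filter_subset _ T hc))
        omega
      have : I = insert ξ K := Finset.eq_of_subset_of_card_le hIZ (by omega)
      exact fundamental_dep h0 hsub haug hT hξT hTmax (this ▸ hI)
    have hKsub : K ⊆ S₀ ∪ K := Finset.subset_union_right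
    have hfin : rnk CI (insert ξ (S₀ ∪ K)) = rnk CI (S₀ ∪ K) :=
      rnk_marginal h0 hsub haug hKsub hrK
    have hScontained : S ⊆ insert ξ (S₀ ∪ K) := by
      intro x hx
      by_cases hxξ : x = ξ
      · rw [hxξ]; exact Finset.mem_insert_self ξ _
      · exact Finset.mem_insert_of_mem (Finset.mem_union_left _
          (Finset.mem_erase.mpr ⟨hxξ, hx⟩))
    have := rnk_le hS hScontained
    rw [hfin, hsp, hrS₀] at this
    omega
  obtain ⟨η, hηK, hηrnk⟩ := hmain
  have hηT : η ∈ T := Finset.filter_subset _ T hηK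
  have hηS₀ : η ∉ S₀ := by
    intro hc
    rw [Finset.insert_eq_self.mpr hc] at hηrnk
    exact hηrnk rfl
  have hηξ : η ≠ ξ := fun hc => hξT (hc ▸ hηT)
  have hηS : η ∉ S := fun hc => hηS₀ (Finset.mem_erase.mpr ⟨hηξ, hc⟩)
  have hrnkup : rnk CI (insert η S₀) = (insert η S₀).card := by
    have h1 : rnk CI S₀ ≤ rnk CI (insert η S₀) := rnk_mono (Finset.subset_insert η S₀)
    have h2 := rnk_card_le (CI := CI) (insert η S₀)
    have h3 : (insert η S₀).card = S₀.card + 1 := Finset.card_insert_of_notMem hηS₀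
    omega
  have hCIind : CI (insert η S₀) := by
    obtain ⟨I, hIZ, hI, hIcard⟩ := exists_rnk h0 (insert η S₀)
    have : I = insert η S₀ := Finset.eq_of_subset_of_card_le hIZ (by omega)
    exact this ▸ hI
  refine ⟨η, hηT, hηS, hCIind, ?_⟩
  rw [hKdef, Finset.mem_filter] at hηK
  exact hηK.2

end Brualdi

end Aux
namespace Aux

variable {n m : ℕ}

def prof (S : Finset (Fin n × Fin m)) (l : Fin n) : ℕ :=
  (S.filter (fun a => a.1 = l)).card

lemma prof_sum (S : Finset (Fin n × Fin m)) : ∑ l, prof S l = S.card :=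
  (Finset.card_eq_sum_card_fiberwise (fun x _ => Finset.mem_univ x.1)).symm

lemma prof_mono {T S : Finset (Fin n × Fin m)} (h : T ⊆ S) (l : Fin n) :
    prof T l ≤ prof S l :=
  Finset.card_le_card (Finset.filter_subset_filter _ h)

lemma prof_insert_eq {S : Finset (Fin n × Fin m)} {a : Fin n × Fin m}
    (ha : a ∉ S) : prof (insert a S) a.1 = prof S a.1 + 1 := by
  unfold prof
  rw [Finset.filter_insert, if_pos rfl,
    Finset.card_insert_of_notMem (fun hc => ha (Finset.mem_filter.mp hc).1)]

lemma prof_insert_ne {S : Finset (Fin n × Fin m)} {a : Fin n × Fin m} {l : Fin n}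
    (hl : a.1 ≠ l) : prof (insert a S) l = prof S l := by
  unfold prof
  rw [Finset.filter_insert, if_neg hl]

lemma prof_erase_eq {S : Finset (Fin n × Fin m)} {a : Fin n × Fin m}
    (ha : a ∈ S) : prof (S.erase a) a.1 + 1 = prof S a.1 := by
  unfold prof
  rw [Finset.filter_erase, Finset.card_erase_of_mem
    (show a ∈ S.filter (fun b => b.1 = a.1) from Finset.mem_filter.mpr ⟨ha, rfl⟩)]
  have : 0 < (S.filter (fun b => b.1 = a.1)).card :=
    Finset.card_pos.mpr ⟨a, Finset.mem_filter.mpr ⟨ha, rfl⟩⟩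
  omega

lemma prof_erase_ne {S : Finset (Fin n × Fin m)} {a : Fin n × Fin m} {l : Fin n}
    (hl : a.1 ≠ l) : prof (S.erase a) l = prof S l := by
  unfold prof
  rw [Finset.filter_erase, Finset.erase_eq_of_notMem
    (show a ∉ S.filter (fun b => b.1 = l) from
      fun hc => hl (Finset.mem_filter.mp hc).2)]

variable (P : Fin n → Matroidal m)

def CInd (S : Finset (Fin n × Fin m)) : Prop := prof S ∈ Vset P

variable {P}

lemma CInd_empty : CInd P (∅ : Finset (Fin n × Fin m)) := by
  refine ⟨fun _ => ∅, ⟨fun i j _ => Finset.disjoint_empty_left _, fun l => ?_⟩, fun l => ?_⟩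
  · unfold Ind; rw [(P l).v_empty]; simp
  · simp [prof]

lemma CInd_subset {S T : Finset (Fin n × Fin m)} (hS : CInd P S) (hTS : T ⊆ S) :
    CInd P T :=
  Vset_down hS (prof_mono hTS)

lemma CInd_aug {S T : Finset (Fin n × Fin m)} (hS : CInd P S) (hT : CInd P T)
    (hcard : S.card < T.card) : ∃ a ∈ T, a ∉ S ∧ CInd P (insert a S) := by
  classical
  have hsum : (∑ l, prof S l) < ∑ l, prof T l := by
    rw [prof_sum, prof_sum]; exact hcard
  obtain ⟨p, hplt, hpV⟩ := Vset_aug (∑ l, (prof S l - prof T l)) (prof S) (prof T)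
    hS hT le_rfl hsum
  have hfib : ∃ a ∈ T, a ∉ S ∧ a.1 = p := by
    by_contra hcon
    push_neg at hcon
    have hsubfil : T.filter (fun a => a.1 = p) ⊆ S.filter (fun a => a.1 = p) := by
      intro x hx
      rw [Finset.mem_filter] at hx ⊢
      refine ⟨?_, hx.2⟩
      by_contra hxS
      exact hcon x hx.1 hxS hx.2
    have := Finset.card_le_card hsubfil
    unfold prof at hplt
    omega
  obtain ⟨a, haT, haS, hap⟩ := hfib
  refine ⟨a, haT, haS, ?_⟩
  unfold CInd
  have : prof (insert a S) = Function.update (prof S) p (prof S p + 1) := by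
    funext l
    by_cases hl : l = p
    · subst hl
      rw [Function.update_self, ← hap, prof_insert_eq haS]
    · rw [Function.update_of_ne hl, prof_insert_ne (hap ▸ hl ∘ Eq.symm)]
  rw [this]
  exact hpV

/-- prefix lift of a vector. -/
def lift (x : Fin n → ℕ) : Finset (Fin n × Fin m) :=
  Finset.univ.filter (fun a => (a.2 : ℕ) < x a.1)

lemma prof_lift {x : Fin n → ℕ} (hx : ∀ l, x l ≤ m) (l : Fin n) :
    prof (lift x : Finset (Fin n × Fin m)) l = x l := by
  unfold prof lift
  rw [Finset.filter_filter]
  have : ((Finset.univ : Finset (Fin n × Fin m)).filter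
      (fun a => (a.2 : ℕ) < x a.1 ∧ a.1 = l)).card
      = (Finset.range (x l)).card := by
    apply Finset.card_bij (fun a _ => (a.2 : ℕ))
    · intro a ha
      rw [Finset.mem_filter] at ha
      rw [Finset.mem_range]
      rw [ha.2.2] at ha
      exact ha.2.1
    · intro a ha b hb hab
      rw [Finset.mem_filter] at ha hb
      ext
      · rw [ha.2.2, hb.2.2]
      · exact hab
    · intro b hb
      rw [Finset.mem_range] at hb
      refine ⟨(l, ⟨b, lt_of_lt_of_le hb (hx l)⟩), ?_, rfl⟩
      rw [Finset.mem_filter]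
      exact ⟨Finset.mem_univ _, hb, rfl⟩
  rw [this, Finset.card_range]

end Aux
namespace Aux

variable {n m : ℕ}

lemma kss_total (u : Fin n → ℕ) : kSmallestSum u n = ∑ l, u l := by
  unfold kSmallestSum
  have hset : {s | ∃ S : Finset (Fin n), S.card = n ∧ s = ∑ i ∈ S, u i}
      = {∑ l, u l} := by
    ext s
    simp only [Set.mem_setOf_eq, Set.mem_singleton_iff]
    constructor
    · rintro ⟨S, hc, rfl⟩
      have : S = Finset.univ := Finset.eq_univ_of_card S (by rw [hc, Fintype.card_fin])
      rw [this]
    · rintro rfl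
      exact ⟨Finset.univ, by rw [Finset.card_univ, Fintype.card_fin], rfl⟩
  rw [hset, csInf_singleton]

lemma kss_strict (u w : Fin n → ℕ) (i j : Fin n) (hij : i ≠ j)
    (hwi : w i = u i + 1) (hwj : w j + 1 = u j) (hbig : u i + 2 ≤ u j)
    (hrest : ∀ l, l ≠ i → l ≠ j → w l = u l) :
    ∃ k ≤ n, kSmallestSum u k < kSmallestSum w k := by
  classical
  set L : Finset (Fin n) := Finset.univ.filter (fun l => u l ≤ u i) with hLdef
  have hiL : i ∈ L := Finset.mem_filter.mpr ⟨Finset.mem_univ i, le_refl _⟩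
  have hk : L.card ≤ n := le_trans (Finset.card_le_univ L) (by simp)
  have hkey : ∀ S : Finset (Fin n), S.card = L.card →
      (∑ l ∈ L, u l) + 1 ≤ ∑ l ∈ S, w l := by
    intro S hS
    have hw_on_L : ∀ l ∈ L, u l ≤ w l := by
      intro l hl
      have hul : u l ≤ u i := (Finset.mem_filter.mp hl).2
      by_cases hli : l = i
      · subst hli; omega
      · have hlj : l ≠ j := by intro hc; subst hc; omega
        rw [hrest l hli hlj]
    have hw_out : ∀ l ∈ S \ L, u i + 1 ≤ w l := by
      intro l hl
      have hul : ¬ u l ≤ u i := by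
        have := (Finset.mem_sdiff.mp hl).2
        simpa [hLdef] using this
      have hli : l ≠ i := by intro hc; subst hc; omega
      by_cases hlj : l = j
      · subst hlj; omega
      · rw [hrest l hli hlj]; omega
    have hcards : (S \ L).card = (L \ S).card := by
      have h1 : (S ∩ L).card + (S \ L).card = S.card := Finset.card_inter_add_card_sdiff S L
      have h2 : (L ∩ S).card + (L \ S).card = L.card := Finset.card_inter_add_card_sdiff L S
      rw [Finset.inter_comm] at h2
      omega
    have hsplitS : (∑ l ∈ S ∩ L, w l) + (∑ l ∈ S \ L, w l) = ∑ l ∈ S, w l :=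
      Finset.sum_inter_add_sum_sdiff S L w
    have hsplitL : (∑ l ∈ L ∩ S, u l) + (∑ l ∈ L \ S, u l) = ∑ l ∈ L, u l :=
      Finset.sum_inter_add_sum_sdiff L S u
    have hbound_LB : (∑ l ∈ L \ S, u l) ≤ (L \ S).card * u i := by
      have := Finset.sum_le_card_nsmul (L \ S) u (u i)
        (fun l hl => (Finset.mem_filter.mp (Finset.mem_sdiff.mp hl).1).2)
      simpa [smul_eq_mul] using this
    have hbound_SB : (S \ L).card * (u i + 1) ≤ ∑ l ∈ S \ L, w l := by
      have := Finset.card_nsmul_le_sum (S \ L) w (u i + 1) hw_out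
      simpa [smul_eq_mul] using this
    have hmul : (S \ L).card * (u i + 1) = (L \ S).card * u i + (L \ S).card := by
      rw [hcards]; ring
    have hinter : (∑ l ∈ L ∩ S, u l) = ∑ l ∈ S ∩ L, u l := by rw [Finset.inter_comm]
    by_cases hiS : i ∈ S
    · have hstrict : (∑ l ∈ S ∩ L, u l) < ∑ l ∈ S ∩ L, w l := by
        apply Finset.sum_lt_sum
        · exact fun l hl => hw_on_L l (Finset.mem_inter.mp hl).2
        · exact ⟨i, Finset.mem_inter.mpr ⟨hiS, hiL⟩, by omega⟩
      omega
    · have hc1 : 1 ≤ (L \ S).card :=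
        Finset.card_pos.mpr ⟨i, Finset.mem_sdiff.mpr ⟨hiL, hiS⟩⟩
      have hweak : (∑ l ∈ S ∩ L, u l) ≤ ∑ l ∈ S ∩ L, w l :=
        Finset.sum_le_sum (fun l hl => hw_on_L l (Finset.mem_inter.mp hl).2)
      omega
  refine ⟨L.card, hk, ?_⟩
  have hle : kSmallestSum u L.card ≤ ∑ l ∈ L, u l :=
    Nat.sInf_le ⟨L, rfl, rfl⟩
  have hge : (∑ l ∈ L, u l) + 1 ≤ kSmallestSum w L.card := by
    apply le_csInf
    · obtain ⟨S₀, -, hS₀⟩ := Finset.exists_subset_card_eq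
        (show L.card ≤ (Finset.univ : Finset (Fin n)).card by
          rw [Finset.card_univ, Fintype.card_fin]; exact hk)
      exact ⟨∑ l ∈ S₀, w l, S₀, hS₀, rfl⟩
    · rintro b ⟨S, hScard, rfl⟩
      exact hkey S hScard
  omega

variable {P : Fin n → Matroidal m}

lemma cLD_good {A : Fin n → Finset (Fin m)} (hA : A ∈ cLD P) : GoodAlloc P A :=
  ⟨hA.2.1, hA.1⟩

lemma cLD_dom {B C : Fin n → Finset (Fin m)} (hB : B ∈ cLD P) (hC : GoodAlloc P C) :
    ∀ k ≤ n, kSmallestSum (fun l => (C l).card) k ≤ kSmallestSum (fun l => (B l).card) k := by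
  intro k hk
  have h := hB.2.2 C hC.1 k hk
  have hCval : (fun l => (P l).v (C l)) = fun l => (C l).card := funext (fun l => hC.2 l)
  have hBval : (fun l => (P l).v (B l)) = fun l => (B l).card := funext (fun l => hB.1 l)
  rwa [hCval, hBval] at h

lemma cLD_total_max {B C : Fin n → Finset (Fin m)} (hB : B ∈ cLD P) (hC : GoodAlloc P C) :
    (∑ l, (C l).card) ≤ ∑ l, (B l).card := by
  have := cLD_dom hB hC n le_rfl
  rwa [kss_total, kss_total] at this

lemma no_improve {B C : Fin n → Finset (Fin m)} (hB : B ∈ cLD P) (hC : GoodAlloc P C)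
    (i j : Fin n) (hij : i ≠ j)
    (h1 : (C i).card = (B i).card + 1) (h2 : (C j).card + 1 = (B j).card)
    (hrest : ∀ l, l ≠ i → l ≠ j → (C l).card = (B l).card) :
    (B j).card ≤ (B i).card + 1 := by
  by_contra hcon
  push_neg at hcon
  obtain ⟨k, hk, hlt⟩ := kss_strict (fun l => (B l).card) (fun l => (C l).card) i j hij
    h1 h2 (show (B i).card + 2 ≤ (B j).card by omega) hrest
  have := cLD_dom hB hC k hk
  omega

lemma cLD_mem_Vset {A : Fin n → Finset (Fin m)} (hA : A ∈ cLD P) :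
    (fun l => (A l).card) ∈ Vset P :=
  ⟨A, cLD_good hA, fun _ => rfl⟩

/-- Key lemma: bundle sizes of an agent across clean Lorenz dominating allocations
differ by at most one. -/
lemma card_le_card_add_one {A B : Fin n → Finset (Fin m)}
    (hA : A ∈ cLD P) (hB : B ∈ cLD P) (i : Fin n) :
    (A i).card ≤ (B i).card + 1 := by
  classical
  by_contra hcon
  push_neg at hcon
  set x : Fin n → ℕ := fun l => (A l).card with hxdef
  set y : Fin n → ℕ := fun l => (B l).card with hydef
  have hgap : y i + 2 ≤ x i := hcon
  have hx : x ∈ Vset P := cLD_mem_Vset hA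
  have hy : y ∈ Vset P := cLD_mem_Vset hB
  have hxm : ∀ l, x l ≤ m := fun l => by
    rw [hxdef]
    calc (A l).card ≤ (Finset.univ : Finset (Fin m)).card := Finset.card_le_univ _
      _ = m := by rw [Finset.card_univ, Fintype.card_fin]
  have hym : ∀ l, y l ≤ m := fun l => by
    rw [hydef]
    calc (B l).card ≤ (Finset.univ : Finset (Fin m)).card := Finset.card_le_univ _
      _ = m := by rw [Finset.card_univ, Fintype.card_fin]
  have htot : (∑ l, x l) = ∑ l, y l :=
    le_antisymm (cLD_total_max hB (cLD_good hA)) (cLD_total_max hA (cLD_good hB))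
  -- the copy matroid
  set S : Finset (Fin n × Fin m) := lift x with hSdef
  set T : Finset (Fin n × Fin m) := lift y with hTdef
  have hprofS : prof S = x := funext (prof_lift hxm)
  have hprofT : prof T = y := funext (prof_lift hym)
  have hCIS : CInd P S := by unfold CInd; rw [hprofS]; exact hx
  have hCIT : CInd P T := by unfold CInd; rw [hprofT]; exact hy
  have hScard : S.card = ∑ l, x l := by rw [← prof_sum S, hprofS]
  have hTcard : T.card = ∑ l, y l := by rw [← prof_sum T, hprofT]
  have hrnk : rnk (CInd P) Finset.univ = ∑ l, y l := by
    refine le_antisymm ?_ ?_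
    · obtain ⟨I, -, hI, hIcard⟩ := exists_rnk (CInd_empty) Finset.univ
      rw [← hIcard, ← prof_sum I]
      obtain ⟨W, hW, hWcard⟩ := hI
      have : ∀ l, prof I l = (W l).card := fun l => (hWcard l).symm
      calc (∑ l, prof I l) = ∑ l, (W l).card := Finset.sum_congr rfl (fun l _ => this l)
        _ ≤ ∑ l, (B l).card := cLD_total_max hB hW
        _ = ∑ l, y l := rfl
    · rw [← hTcard]; exact rnk_le hCIT (Finset.subset_univ T)
  have hSmax : S.card = rnk (CInd P) Finset.univ := by rw [hScard, htot, hrnk]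
  have hTmax : T.card = rnk (CInd P) Finset.univ := by rw [hTcard, hrnk]
  have hyim : y i < m := by have := hxm i; omega
  set ξ : Fin n × Fin m := (i, ⟨y i, hyim⟩) with hξdef
  have hξS : ξ ∈ S := by
    rw [hSdef]
    unfold lift
    rw [Finset.mem_filter]
    exact ⟨Finset.mem_univ _, by simp [hξdef]; omega⟩
  have hξT : ξ ∉ T := by
    rw [hTdef]
    unfold lift
    rw [Finset.mem_filter]
    simp [hξdef]
  obtain ⟨η, hηT, hηS, hCI1, hCI2⟩ := brualdi_exchange CInd_empty
    (fun {S T} hS hTS => CInd_subset hS hTS)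
    (fun {S T} hS hT hc => CInd_aug hS hT hc)
    hCIS hCIT hSmax hTmax hξS hξT
  set j : Fin n := η.1 with hjdef
  have hηmem : (η.2 : ℕ) < y j := by
    have := hηT
    rw [hTdef] at this
    unfold lift at this
    rw [Finset.mem_filter] at this
    exact this.2
  have hηnot : x j ≤ (η.2 : ℕ) := by
    have := hηS
    rw [hSdef] at this
    unfold lift at this
    rw [Finset.mem_filter] at this
    push_neg at this
    exact this (Finset.mem_univ _)
  have hxjyj : x j < y j := by omega
  have hji : j ≠ i := by
    intro hc
    rw [hc] at hxjyj
    omega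
  have hξ1 : ξ.1 = i := rfl
  have hη1 : η.1 = j := rfl
  have hηξ : η ≠ ξ := by
    intro hc
    exact hji (by rw [← hη1, hc, hξ1])
  -- allocation C₁ realizing x - e_i + e_j
  have hz1 : prof (insert η (S.erase ξ)) ∈ Vset P := hCI1
  have hz1i : prof (insert η (S.erase ξ)) i + 1 = x i := by
    rw [prof_insert_ne (l := i) (by rw [hη1]; exact hji)]
    have := prof_erase_eq (S := S) (a := ξ) hξS
    rw [hξ1] at this
    rw [this, hprofS]
  have hz1j : prof (insert η (S.erase ξ)) j = x j + 1 := by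
    have h1 := prof_insert_eq (S := S.erase ξ) (a := η)
      (fun hc => hηS (Finset.mem_of_mem_erase hc))
    rw [hη1] at h1
    rw [h1, prof_erase_ne (by rw [hξ1]; exact Ne.symm hji), hprofS]
  have hz1l : ∀ l, l ≠ i → l ≠ j → prof (insert η (S.erase ξ)) l = x l := by
    intro l hl hlj
    rw [prof_insert_ne (by rw [hη1]; exact Ne.symm hlj),
      prof_erase_ne (by rw [hξ1]; exact Ne.symm hl), hprofS]
  obtain ⟨C₁, hC₁good, hC₁card⟩ := hz1
  -- A dominates C₁ : transfer j ← i
  have hAineq : x i ≤ x j + 1 := by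
    have := no_improve hA hC₁good j i hji
      (by rw [hC₁card j, hz1j])
      (by rw [hC₁card i]; exact hz1i)
      (fun l hlj hli => by rw [hC₁card l, hz1l l hli hlj])
    exact this
  -- allocation C₂ realizing y + e_i - e_j
  have hz2 : prof (insert ξ (T.erase η)) ∈ Vset P := hCI2
  have hz2i : prof (insert ξ (T.erase η)) i = y i + 1 := by
    have h1 := prof_insert_eq (S := T.erase η) (a := ξ)
      (fun hc => hξT (Finset.mem_of_mem_erase hc))
    rw [hξ1] at h1
    rw [h1, prof_erase_ne (by rw [hη1]; exact hji), hprofT]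
  have hz2j : prof (insert ξ (T.erase η)) j + 1 = y j := by
    rw [prof_insert_ne (l := j) (by rw [hξ1]; exact Ne.symm hji)]
    have := prof_erase_eq (S := T) (a := η) hηT
    rw [hη1] at this
    rw [this, hprofT]
  have hz2l : ∀ l, l ≠ i → l ≠ j → prof (insert ξ (T.erase η)) l = y l := by
    intro l hl hlj
    rw [prof_insert_ne (by rw [hξ1]; exact Ne.symm hl),
      prof_erase_ne (by rw [hη1]; exact Ne.symm hlj), hprofT]
  obtain ⟨C₂, hC₂good, hC₂card⟩ := hz2
  have hBineq : y j ≤ y i + 1 := by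
    have := no_improve hB hC₂good i j (Ne.symm hji)
      (by rw [hC₂card i, hz2i])
      (by rw [hC₂card j]; exact hz2j)
      (fun l hli hlj => by rw [hC₂card l, hz2l l hli hlj])
    exact this
  omega

lemma maxMin (P : Fin n → Matroidal m) (i : Fin n) :
    maxSize P i = minSize P i ∨ maxSize P i = minSize P i + 1 := by
  classical
  by_cases hne : {c | ∃ A ∈ cLD P, c = (A i).card}.Nonempty
  · have hbdd : BddAbove {c | ∃ A ∈ cLD P, c = (A i).card} := by
      refine ⟨m, ?_⟩
      rintro c ⟨A, hA, rfl⟩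
      calc (A i).card ≤ (Finset.univ : Finset (Fin m)).card := Finset.card_le_univ _
        _ = m := by rw [Finset.card_univ, Fintype.card_fin]
    have hsup : maxSize P i ∈ {c | ∃ A ∈ cLD P, c = (A i).card} :=
      Nat.sSup_mem hne hbdd
    have hinf : minSize P i ∈ {c | ∃ A ∈ cLD P, c = (A i).card} :=
      Nat.sInf_mem hne
    obtain ⟨A, hA, hAc⟩ := hsup
    obtain ⟨B, hB, hBc⟩ := hinf
    have h1 : (A i).card ≤ (B i).card + 1 := card_le_card_add_one hA hB i
    have h2 : minSize P i ≤ maxSize P i := by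
      apply Nat.sInf_le
      exact ⟨A, hA, hAc⟩
    omega
  · rw [Set.not_nonempty_iff_eq_empty] at hne
    left
    unfold maxSize minSize
    rw [hne]
    simp

end Aux

/-- Proposition 3.7: for any agent `i`, the difference between the largest and the
smallest size of `i`'s bundle over all clean Lorenz dominating allocations is 0 or 1. -/
theorem maxSize_sub_minSize_le_one {n m : ℕ} (P : Fin n → Matroidal m) (i : Fin n) :
    maxSize P i = minSize P i ∨ maxSize P i = minSize P i + 1 := by
  exact Aux.maxMin P i
end

section
/- For any profile P of matroidal valuations, any agent i, and any two allocations A, A' ∈ cLD(P), the agent's utility under the SE subsidy is identical: |A_i| + p_i = |A'_i| + p'_i, where p and p' are the SE subsidy vectors for A and A' respectively. -/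
open Finset

/-!
The bundle sizes of clean allocations are exactly the integer points of the polymatroid given by
the matroid union rank `unionRank` of the agents' valuations (Edmonds' intersection theorem for
the matroid "each good once" and the direct sum of the agents' matroids). A clean Lorenz
dominating allocation is a base of this polymatroid that no unit transfer from an agent to one
poorer by two or more can improve. If two such bases had `y i ≥ x i + 2`, base exchange would give
`j` with `y j < x j` such that moving a unit from `j` to `i` in `x`, and from `i` to `j` in `y`,
stays feasible; Lorenz dominance then forces `x j ≤ x i + 1` and `y i ≤ y j + 1`, which
contradicts `y j < x j`. Hence bundle sizes vary by at most one across `cLD P`, the largest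
bundle size is the same for all of them, and an agent whose size varies is subsidised exactly
when it holds the smaller bundle.
-/

structure IsMatroidRank {α : Type*} [DecidableEq α] (r : Finset α → ℕ) : Prop where
  empty : r ∅ = 0
  mono : Monotone r
  submod : ∀ X Y, r (X ∪ Y) + r (X ∩ Y) ≤ r X + r Y
  insert_le : ∀ X e, r (insert e X) ≤ r X + 1

theorem Matroidal.isMatroidRank {m : ℕ} (w : Matroidal m) : IsMatroidRank w.v :=
  ⟨w.v_empty, fun _ _ h => w.mono h, w.submodular, w.marginal⟩

namespace IsMatroidRank

variable {α : Type*} [DecidableEq α] {r : Finset α → ℕ}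

theorem union_le_add_card (hr : IsMatroidRank r) (X U : Finset α) : r (X ∪ U) ≤ r X + #U := by
  induction U using Finset.induction_on with
  | empty => simp
  | insert a U ha ih =>
    rw [union_insert, card_insert_of_notMem ha]
    linarith [hr.insert_le (X ∪ U) a]

theorem le_card (hr : IsMatroidRank r) (X : Finset α) : r X ≤ #X := by
  simpa [hr.empty] using hr.union_le_add_card ∅ X

theorem le_add_card_sdiff (hr : IsMatroidRank r) (X Y : Finset α) : r Y ≤ r X + #(Y \ X) :=
  calc r Y ≤ r (X ∪ (Y \ X)) := hr.mono (by simp [subset_union_right])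
    _ ≤ r X + #(Y \ X) := hr.union_le_add_card X _

theorem singleton_le_one (hr : IsMatroidRank r) (e : α) : r {e} ≤ 1 := by
  simpa [hr.empty] using hr.insert_le ∅ e

theorem insert_eq_of_loop (hr : IsMatroidRank r) {e : α} (he : r {e} = 0) (Z : Finset α) :
    r (insert e Z) = r Z := by
  refine le_antisymm ?_ (hr.mono (subset_insert e Z))
  have := hr.submod Z {e}
  rw [union_singleton, he] at this
  omega

theorem contract (hr : IsMatroidRank r) {e : α} (he : r {e} = 1) :
    IsMatroidRank fun X => r (insert e X) - 1 := by
  have hpos : ∀ X, 1 ≤ r (insert e X) := fun X =>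
    he ▸ hr.mono (singleton_subset_iff.2 (mem_insert_self e X))
  refine ⟨by simp [he], fun X Y h => Nat.sub_le_sub_right (hr.mono (insert_subset_insert e h)) 1,
    fun X Y => ?_, fun X f => ?_⟩
  · have := hr.submod (insert e X) (insert e Y)
    rw [← insert_union_distrib, ← insert_inter_distrib] at this
    have := hpos (X ∪ Y); have := hpos (X ∩ Y)
    omega
  · have := hr.insert_le (insert e X) f
    rw [insert_comm] at this
    have := hpos X
    omega

theorem truncate (hr : IsMatroidRank r) (c : ℕ) : IsMatroidRank fun X => min (r X) c := by
  refine ⟨by simp [hr.empty], fun X Y h => min_le_min_right c (hr.mono h), fun X Y => ?_,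
    fun X e => ?_⟩
  · have := hr.submod X Y
    have := hr.mono (subset_union_left (s₁ := X) (s₂ := Y))
    have := hr.mono (subset_union_right (s₁ := X) (s₂ := Y))
    have := hr.mono (inter_subset_left (s₁ := X) (s₂ := Y))
    have := hr.mono (inter_subset_right (s₁ := X) (s₂ := Y))
    omega
  · have := hr.insert_le X e
    omega

end IsMatroidRank

section Intersection

variable {α : Type*} [DecidableEq α] {r₁ r₂ : Finset α → ℕ} {G : Finset α} {e : α}
  {k : ℕ}

theorem IsMatroidRank.bound_erase_of_loop_left (h₁ : IsMatroidRank r₁) (he₁ : r₁ {e} = 0)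
    (he : e ∈ G) (hk : ∀ X ⊆ G, k ≤ r₁ X + r₂ (G \ X)) :
    ∀ X ⊆ G.erase e, k ≤ r₁ X + r₂ (G.erase e \ X) := by
  intro X hX
  have := hk (insert e X) (insert_subset he (hX.trans (erase_subset e G)))
  rwa [h₁.insert_eq_of_loop he₁, sdiff_insert, ← erase_sdiff_comm] at this

theorem IsMatroidRank.bound_erase_of_loop_right (h₂ : IsMatroidRank r₂) (he₂ : r₂ {e} = 0)
    (he : e ∈ G) (hk : ∀ X ⊆ G, k ≤ r₁ X + r₂ (G \ X)) :
    ∀ X ⊆ G.erase e, k ≤ r₁ X + r₂ (G.erase e \ X) := by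
  intro X hX
  have heX : e ∉ X := fun h => notMem_erase e G (hX h)
  have := hk X (hX.trans (erase_subset e G))
  rwa [← insert_erase (mem_sdiff.2 ⟨he, heX⟩), h₂.insert_eq_of_loop he₂,
    ← erase_sdiff_comm] at this

theorem IsMatroidRank.false_of_deletion_and_contraction_fail (h₁ : IsMatroidRank r₁)
    (h₂ : IsMatroidRank r₂) (he : e ∈ G) (hk : ∀ X ⊆ G, k ≤ r₁ X + r₂ (G \ X))
    {X Y : Finset α} (hX : X ⊆ G.erase e) (hY : Y ⊆ G.erase e)
    (hdel : r₁ X + r₂ (G.erase e \ X) < k) (hcon : r₁ (insert e Y) + r₂ (G \ Y) ≤ k) :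
    False := by
  have heX : e ∉ X := fun h => notMem_erase e G (hX h)
  have heY : e ∉ Y := fun h => notMem_erase e G (hY h)
  have hsub₁ := h₁.submod X (insert e Y)
  have hsub₂ := h₂.submod (G.erase e \ X) (G \ Y)
  have hinter : X ∩ insert e Y = X ∩ Y := by ext; simp only [mem_inter, mem_insert]; grind
  have hunion : G.erase e \ X ∪ G \ Y = G \ (X ∩ Y) := by
    ext; simp only [mem_union, mem_sdiff, mem_erase, mem_inter]; grind
  have hinter' : G.erase e \ X ∩ (G \ Y) = G \ (X ∪ insert e Y) := by
    ext; simp only [mem_inter, mem_sdiff, mem_erase, mem_union, mem_insert]; grind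
  rw [hinter] at hsub₁
  rw [hunion, hinter'] at hsub₂
  have := hk (X ∩ Y) (inter_subset_left.trans (hX.trans (erase_subset e G)))
  have := hk (X ∪ insert e Y)
    (union_subset (hX.trans (erase_subset e G)) (insert_subset he (hY.trans (erase_subset e G))))
  omega

/-- The nontrivial half of Edmonds' matroid intersection theorem, by deletion or contraction of
an element `e`. -/
theorem IsMatroidRank.exists_common_indep (h₁ : IsMatroidRank r₁) (h₂ : IsMatroidRank r₂)
    (hk : ∀ X ⊆ G, k ≤ r₁ X + r₂ (G \ X)) :
    ∃ I ⊆ G, r₁ I = #I ∧ r₂ I = #I ∧ k ≤ #I := by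
  induction G using Finset.strongInduction generalizing r₁ r₂ k with
  | H G ih =>
    rcases Nat.eq_zero_or_pos k with rfl | hkpos
    · exact ⟨∅, empty_subset G, by simp [h₁.empty], by simp [h₂.empty], le_rfl⟩
    obtain ⟨e, he⟩ : G.Nonempty := nonempty_iff_ne_empty.2 fun hG => by
      simpa [hG, h₁.empty, h₂.empty] using (hk ∅ (empty_subset G)).trans_lt' hkpos
    have hlt : G.erase e ⊂ G := erase_ssubset he
    by_cases hdel : ∀ X ⊆ G.erase e, k ≤ r₁ X + r₂ (G.erase e \ X)
    · obtain ⟨I, hIG, hI₁, hI₂, hkI⟩ := ih _ hlt h₁ h₂ hdel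
      exact ⟨I, hIG.trans (erase_subset e G), hI₁, hI₂, hkI⟩
    push Not at hdel
    obtain ⟨X, hX, hXk⟩ := hdel
    have he₁ : r₁ {e} = 1 := le_antisymm (h₁.singleton_le_one e) <| Nat.one_le_iff_ne_zero.2
      fun h => hXk.not_ge (h₁.bound_erase_of_loop_left h he hk X hX)
    have he₂ : r₂ {e} = 1 := le_antisymm (h₂.singleton_le_one e) <| Nat.one_le_iff_ne_zero.2
      fun h => hXk.not_ge (h₂.bound_erase_of_loop_right h he hk X hX)
    have hpos₁ : ∀ Y, 1 ≤ r₁ (insert e Y) := fun Y =>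
      he₁ ▸ h₁.mono (singleton_subset_iff.2 (mem_insert_self e Y))
    have hpos₂ : ∀ Y, 1 ≤ r₂ (insert e Y) := fun Y =>
      he₂ ▸ h₂.mono (singleton_subset_iff.2 (mem_insert_self e Y))
    have hcon : ∀ Y ⊆ G.erase e,
        k - 1 ≤ (r₁ (insert e Y) - 1) + (r₂ (insert e (G.erase e \ Y)) - 1) := by
      intro Y hY
      by_contra! hYk
      have heY : e ∉ Y := fun h => notMem_erase e G (hY h)
      rw [erase_sdiff_comm, insert_erase (mem_sdiff.2 ⟨he, heY⟩)] at hYk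
      have := hpos₁ Y
      have := hpos₂ ((G \ Y).erase e)
      rw [insert_erase (mem_sdiff.2 ⟨he, heY⟩)] at this
      exact h₁.false_of_deletion_and_contraction_fail h₂ he hk hX hY hXk (by omega)
    obtain ⟨I, hIG, hI₁, hI₂, hkI⟩ :=
      ih _ hlt (h₁.contract he₁) (h₂.contract he₂) hcon
    have heI : e ∉ I := fun h => notMem_erase e G (hIG h)
    refine ⟨insert e I, insert_subset he (hIG.trans (erase_subset e G)), ?_, ?_, ?_⟩ <;>
      simp only [card_insert_of_notMem heI] <;> grind

end Intersection

section Allocation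

variable {α ι : Type*} [DecidableEq α] [DecidableEq ι]

theorem isMatroidRank_card_image_fst :
    IsMatroidRank fun X : Finset (α × ι) => #(X.image Prod.fst) := by
  refine ⟨by simp, fun X Y h => card_le_card (image_subset_image h), fun X Y => ?_,
    fun X p => ?_⟩
  · rw [image_union, ← card_union_add_card_inter (X.image Prod.fst)]
    exact Nat.add_le_add_left (card_le_card (image_inter_subset Prod.fst X Y)) _
  · rw [image_insert]
    exact card_insert_le _ _

variable [Fintype α]

def bundleOf (X : Finset (α × ι)) (l : ι) : Finset α := {g | (g, l) ∈ X}

@[simp] theorem mem_bundleOf {X : Finset (α × ι)} {l : ι} {g : α} :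
    g ∈ bundleOf X l ↔ (g, l) ∈ X := by
  simp [bundleOf]

theorem bundleOf_mono : Monotone (bundleOf (α := α) (ι := ι)) :=
  fun X Y h l g => by simpa using @h (g, l)

theorem bundleOf_insert (X : Finset (α × ι)) (p : α × ι) (l : ι) :
    bundleOf (insert p X) l = if p.2 = l then insert p.1 (bundleOf X l) else bundleOf X l := by
  ext g
  split_ifs with h <;> simp only [mem_bundleOf, mem_insert, Prod.ext_iff, h, and_true]
  grind

variable [Fintype ι]

theorem card_eq_sum_card_bundleOf (X : Finset (α × ι)) : #X = ∑ l, #(bundleOf X l) := by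
  rw [card_eq_sum_card_fiberwise (f := Prod.snd) (t := univ) fun _ _ => mem_univ _]
  refine sum_congr rfl fun l _ => card_nbij' Prod.fst (fun g => (g, l)) ?_ ?_ ?_ ?_
  · rintro ⟨g, l'⟩ h
    obtain ⟨h, rfl⟩ : (g, l') ∈ X ∧ l' = l := by simpa using h
    simpa
  · intro g; simp
  · rintro ⟨g, l'⟩; simp +contextual
  · intro g; simp

theorem IsMatroidRank.sum_bundleOf {w : ι → Finset α → ℕ}
    (hw : ∀ l, IsMatroidRank (w l)) :
    IsMatroidRank fun X : Finset (α × ι) => ∑ l, w l (bundleOf X l) := by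
  refine ⟨by simp [bundleOf, fun l => (hw l).empty],
    fun X Y h => sum_le_sum fun l _ => (hw l).mono (bundleOf_mono h l), fun X Y => ?_,
    fun X p => ?_⟩
  · rw [← sum_add_distrib, ← sum_add_distrib]
    refine sum_le_sum fun l _ => ?_
    convert (hw l).submod (bundleOf X l) (bundleOf Y l) using 3 <;> ext <;> simp
  · calc ∑ l, w l (bundleOf (insert p X) l)
        ≤ ∑ l, (w l (bundleOf X l) + if p.2 = l then 1 else 0) := sum_le_sum fun l _ => by
          rw [bundleOf_insert]
          split_ifs
          exacts [(hw l).insert_le _ _, le_rfl]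
      _ = ∑ l, w l (bundleOf X l) + 1 := by simp [sum_add_distrib]

/-- A common independent set of the matroid "each good at most once" and the direct sum of the
agents' matroids on the (good, agent) pairs is a clean allocation. -/
theorem exists_clean_allocation_of_le {w : ι → Finset α → ℕ}
    (hw : ∀ l, IsMatroidRank (w l)) {k : ℕ}
    (hk : ∀ Z : Finset α, k ≤ #(univ \ Z) + ∑ l, w l Z) :
    ∃ B : ι → Finset α, (Pairwise fun a b => Disjoint (B a) (B b)) ∧
      (∀ l, w l (B l) = #(B l)) ∧ k ≤ ∑ l, #(B l) := by
  obtain ⟨I, -, hI₁, hI₂, hkI⟩ := isMatroidRank_card_image_fst.exists_common_indep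
    (IsMatroidRank.sum_bundleOf hw) (G := univ) (k := k) fun X _ => by
      have := hk (univ \ X.image Prod.fst)
      simp only [sdiff_sdiff_right_self, inf_eq_inter, univ_inter] at this
      refine this.trans (Nat.add_le_add_left (sum_le_sum fun l _ => (hw l).mono fun g => ?_) _)
      simp only [mem_sdiff, mem_univ, true_and, mem_image, mem_bundleOf]
      exact fun hg h => hg ⟨(g, l), h, rfl⟩
  have hinj : Set.InjOn Prod.fst (I : Set (α × ι)) := injOn_of_card_image_eq hI₁
  rw [card_eq_sum_card_bundleOf] at hI₂ hkI
  refine ⟨bundleOf I, fun a b hab => disjoint_left.2 fun g hga hgb => ?_, fun l => ?_, hkI⟩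
  · exact hab (congrArg Prod.snd (hinj (mem_bundleOf.1 hga) (mem_bundleOf.1 hgb) rfl))
  · exact (sum_eq_sum_iff_of_le fun l _ => (hw l).le_card _).1 hI₂ l (mem_univ l)

end Allocation

section UnionRank

variable {α ι : Type*} [Fintype α] [DecidableEq α] {w : ι → Finset α → ℕ}

/-- The min-max formula of the matroid union theorem: the largest number of goods that a clean
allocation can give to the agents in `S`. -/
noncomputable def unionRank (w : ι → Finset α → ℕ) (S : Finset ι) : ℕ :=
  univ.inf' univ_nonempty fun Z : Finset α => #(univ \ Z) + ∑ l ∈ S, w l Z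

theorem unionRank_le (S : Finset ι) (Z : Finset α) :
    unionRank w S ≤ #(univ \ Z) + ∑ l ∈ S, w l Z :=
  inf'_le _ (mem_univ Z)

theorem exists_unionRank_eq (S : Finset ι) :
    ∃ Z : Finset α, unionRank w S = #(univ \ Z) + ∑ l ∈ S, w l Z :=
  let ⟨Z, _, hZ⟩ := exists_mem_eq_inf' univ_nonempty _
  ⟨Z, hZ⟩

theorem unionRank_empty : unionRank w ∅ = 0 := by
  simpa using unionRank_le (w := w) ∅ univ

theorem unionRank_union_add_inter_le [Fintype ι] [DecidableEq ι]
    (hw : ∀ l, IsMatroidRank (w l)) (S T : Finset ι) :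
    unionRank w (S ∪ T) + unionRank w (S ∩ T) ≤ unionRank w S + unionRank w T := by
  obtain ⟨Z, hZ⟩ := exists_unionRank_eq (w := w) S
  obtain ⟨W, hW⟩ := exists_unionRank_eq (w := w) T
  have hcard : #(univ \ (Z ∩ W)) + #(univ \ (Z ∪ W)) = #(univ \ Z) + #(univ \ W) := by
    rw [sdiff_inter_distrib_right, sdiff_union_distrib, card_union_add_card_inter]
  have hsum : ∑ l ∈ S ∪ T, w l (Z ∩ W) + ∑ l ∈ S ∩ T, w l (Z ∪ W) ≤
      ∑ l ∈ S, w l Z + ∑ l ∈ T, w l W := by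
    rw [← Fintype.sum_extend_by_zero (S ∪ T), ← Fintype.sum_extend_by_zero (S ∩ T),
      ← Fintype.sum_extend_by_zero S, ← Fintype.sum_extend_by_zero T, ← sum_add_distrib,
      ← sum_add_distrib]
    refine sum_le_sum fun l _ => ?_
    have := (hw l).submod Z W
    have := (hw l).mono (inter_subset_left (s₁ := Z) (s₂ := W))
    have := (hw l).mono (inter_subset_right (s₁ := Z) (s₂ := W))
    by_cases hS : l ∈ S <;> by_cases hT : l ∈ T <;> simp [hS, hT] <;> omega
  linarith [unionRank_le (w := w) (S ∪ T) (Z ∩ W), unionRank_le (w := w) (S ∩ T) (Z ∪ W)]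

theorem sum_le_unionRank (hw : ∀ l, IsMatroidRank (w l)) {B : ι → Finset α}
    (hB : Pairwise fun a b => Disjoint (B a) (B b)) (S : Finset ι) :
    ∑ l ∈ S, w l (B l) ≤ unionRank w S := by
  refine le_inf' _ _ fun Z _ => ?_
  have hout : ∑ l ∈ S, #(B l \ Z) ≤ #(univ \ Z) := by
    rw [← card_biUnion fun a _ b _ hab => (hB hab).mono sdiff_subset sdiff_subset]
    exact card_le_card fun g => by simp +contextual
  calc ∑ l ∈ S, w l (B l) ≤ ∑ l ∈ S, (w l Z + #(B l \ Z)) :=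
        sum_le_sum fun l _ => (hw l).le_add_card_sdiff Z (B l)
    _ ≤ #(univ \ Z) + ∑ l ∈ S, w l Z := by rw [sum_add_distrib]; omega

/-- Truncate each agent's matroid at its prescribed size and apply the intersection theorem. -/
theorem exists_clean_allocation_card_eq [Fintype ι] [DecidableEq ι]
    (hw : ∀ l, IsMatroidRank (w l)) {z : ι → ℕ}
    (hz : ∀ S, ∑ l ∈ S, z l ≤ unionRank w S) :
    ∃ B : ι → Finset α, (Pairwise fun a b => Disjoint (B a) (B b)) ∧
      (∀ l, w l (B l) = #(B l)) ∧ ∀ l, #(B l) = z l := by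
  obtain ⟨B, hB, hclean, hk⟩ := exists_clean_allocation_of_le (k := ∑ l, z l)
    (fun l => (hw l).truncate (z l)) fun Z => by
      rw [← sum_filter_add_sum_filter_not univ (fun l => w l Z < z l) z,
        ← sum_filter_add_sum_filter_not univ (fun l => w l Z < z l)]
      have hlow := (hz _).trans (unionRank_le (w := w) {l | w l Z < z l} Z)
      have e₁ : ∑ l with w l Z < z l, min (w l Z) (z l) = ∑ l with w l Z < z l, w l Z :=
        sum_congr rfl fun l hl => min_eq_left (mem_filter.1 hl).2.le
      have e₂ : ∑ l with ¬w l Z < z l, min (w l Z) (z l) = ∑ l with ¬w l Z < z l, z l :=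
        sum_congr rfl fun l hl => min_eq_right (not_lt.1 (mem_filter.1 hl).2)
      omega
  have hle : ∀ l, #(B l) ≤ z l := fun l => (hclean l).symm.trans_le (min_le_right _ _)
  have hcard : ∀ l, #(B l) = z l := fun l =>
    (sum_eq_sum_iff_of_le fun l _ => hle l).1 (le_antisymm (sum_le_sum fun l _ => hle l) hk) l
      (mem_univ l)
  refine ⟨B, hB, fun l => le_antisymm ((hw l).le_card _) ?_, hcard⟩
  have := hclean l
  rw [hcard l] at this ⊢
  omega

end UnionRank

section Polymatroid

variable {ι : Type*} [DecidableEq ι] {g : Finset ι → ℕ} {x y z : ι → ℕ} {i j : ι}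

def InPolymatroid (g : Finset ι → ℕ) (x : ι → ℕ) : Prop :=
  ∀ S, ∑ l ∈ S, x l ≤ g S

theorem InPolymatroid.of_transfer (hx : InPolymatroid g x)
    (htight : ∀ S, i ∈ S → ∑ l ∈ S, x l = g S → j ∈ S)
    (hz : z + Pi.single j 1 = x + Pi.single i 1) : InPolymatroid g z := by
  intro S
  have hsum := congrArg (fun f => ∑ l ∈ S, f l) hz
  simp only [Pi.add_apply, sum_add_distrib, sum_pi_single'] at hsum
  have := hx S
  by_cases hiS : i ∈ S
  · by_cases hjS : j ∈ S
    · simp only [hiS, hjS, ↓reduceIte] at hsum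
      omega
    · have : ∑ l ∈ S, x l < g S := lt_of_le_of_ne (hx S) fun h => hjS (htight S hiS h)
      simp only [hiS, hjS, ↓reduceIte] at hsum
      omega
  · simp only [hiS, ↓reduceIte] at hsum
    omega

theorem InPolymatroid.tight_union_inter (hx : InPolymatroid g x)
    (hg : ∀ S T, g (S ∪ T) + g (S ∩ T) ≤ g S + g T) {S T : Finset ι}
    (hS : ∑ l ∈ S, x l = g S) (hT : ∑ l ∈ T, x l = g T) :
    ∑ l ∈ S ∪ T, x l = g (S ∪ T) ∧ ∑ l ∈ S ∩ T, x l = g (S ∩ T) := by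
  have := hx (S ∪ T)
  have := hx (S ∩ T)
  have := hg S T
  have : ∑ l ∈ S ∪ T, x l + ∑ l ∈ S ∩ T, x l = ∑ l ∈ S, x l + ∑ l ∈ T, x l :=
    sum_union_inter
  omega

theorem InPolymatroid.exists_exchange [Fintype ι]
    (hg : ∀ S T, g (S ∪ T) + g (S ∩ T) ≤ g S + g T) (hg₀ : g ∅ = 0)
    (hx : InPolymatroid g x) (hx_univ : ∑ l, x l = g univ) (hy : InPolymatroid g y)
    (hi : x i < y i) :
    ∃ j, y j < x j ∧ (∀ S, i ∈ S → ∑ l ∈ S, x l = g S → j ∈ S) ∧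
      (∀ S, j ∈ S → ∑ l ∈ S, y l = g S → i ∈ S) := by
  -- `T` is the least `x`-tight set containing `i`, `U` the greatest `y`-tight set avoiding `i`
  set T := ({S | i ∈ S ∧ ∑ l ∈ S, x l = g S} : Finset (Finset ι)).inf id
  set U := ({S | i ∉ S ∧ ∑ l ∈ S, y l = g S} : Finset (Finset ι)).sup id
  have hT : i ∈ T ∧ ∑ l ∈ T, x l = g T := by
    refine inf_induction (p := fun S => i ∈ S ∧ ∑ l ∈ S, x l = g S)
      ⟨mem_univ i, hx_univ⟩
      (fun S hS S' hS' =>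
        ⟨mem_inter.2 ⟨hS.1, hS'.1⟩, (hx.tight_union_inter hg hS.2 hS'.2).2⟩)
      fun S hS => (mem_filter.1 hS).2
  have hU : i ∉ U ∧ ∑ l ∈ U, y l = g U := by
    refine sup_induction (p := fun S => i ∉ S ∧ ∑ l ∈ S, y l = g S)
      ⟨notMem_empty i, by simp [hg₀]⟩
      (fun S hS S' hS' => ⟨by simp [hS.1, hS'.1], (hy.tight_union_inter hg hS.2 hS'.2).1⟩)
      fun S hS => (mem_filter.1 hS).2
  have hT_le : ∀ S, i ∈ S → ∑ l ∈ S, x l = g S → T ⊆ S := fun S hiS hS =>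
    inf_le (f := id) (mem_filter.2 ⟨mem_univ S, hiS, hS⟩)
  have hU_ge : ∀ S, i ∉ S → ∑ l ∈ S, y l = g S → S ⊆ U := fun S hiS hS =>
    le_sup (f := id) (mem_filter.2 ⟨mem_univ S, hiS, hS⟩)
  have hcount : ∑ l ∈ T \ U, y l ≤ ∑ l ∈ T \ U, x l := by
    have := hy (T ∪ U)
    have := hx (T ∩ U)
    have := hg T U
    have : ∑ l ∈ T ∪ U, y l = ∑ l ∈ T \ U, y l + ∑ l ∈ U, y l := by
      rw [← sdiff_union_self_eq_union, sum_union sdiff_disjoint]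
    have : ∑ l ∈ T ∩ U, x l + ∑ l ∈ T \ U, x l = ∑ l ∈ T, x l :=
      sum_inter_add_sum_sdiff T U x
    omega
  obtain ⟨j, hj, hyx⟩ : ∃ j ∈ T \ U, y j < x j := by
    by_contra! h
    have hiTU : i ∈ T \ U := mem_sdiff.2 ⟨hT.1, hU.1⟩
    exact hcount.not_gt (sum_lt_sum (fun l hl => h l hl) ⟨i, hiTU, hi⟩)
  refine ⟨j, hyx, fun S hiS hS => hT_le S hiS hS (mem_sdiff.1 hj).1, fun S hjS hS => ?_⟩
  by_contra hiS
  exact (mem_sdiff.1 hj).2 (hU_ge S hiS hS hjS)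

end Polymatroid

theorem sum_add_le_sum_of_threshold {ι : Type*} [DecidableEq ι] {u : ι → ℕ} {T S : Finset ι}
    {a : ℕ} (hT : ∀ l ∈ T, u l ≤ a) (hTc : ∀ l ∉ T, a + 1 ≤ u l) (hS : #S = #T + 1) :
    ∑ l ∈ T, u l + (a + 1) ≤ ∑ l ∈ S, u l := by
  have h₁ := card_nsmul_le_sum (S \ T) u (a + 1) fun l hl => hTc l (mem_sdiff.1 hl).2
  have h₂ := sum_le_card_nsmul (T \ S) u a fun l hl => hT l (mem_sdiff.1 hl).1
  have h₃ := sum_inter_add_sum_sdiff S T u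
  have h₄ := sum_inter_add_sum_sdiff T S u
  have h₅ := card_inter_add_card_sdiff S T
  have h₆ := card_inter_add_card_sdiff T S
  rw [inter_comm] at h₄ h₆
  simp only [smul_eq_mul] at h₁ h₂
  nlinarith

section SmallestSum

variable {n : ℕ} {u u' : Fin n → ℕ} {k : ℕ}

theorem kSmallestSum_le {S : Finset (Fin n)} (hS : #S = k) :
    kSmallestSum u k ≤ ∑ l ∈ S, u l :=
  Nat.sInf_le ⟨S, hS, rfl⟩

theorem exists_kSmallestSum_eq (hk : k ≤ n) :
    ∃ S : Finset (Fin n), #S = k ∧ kSmallestSum u k = ∑ l ∈ S, u l := by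
  obtain ⟨S, -, hS⟩ := exists_subset_card_eq (s := (univ : Finset (Fin n))) (by simpa using hk)
  exact Nat.sInf_mem (s := {s | ∃ S : Finset (Fin n), #S = k ∧ s = ∑ l ∈ S, u l})
    ⟨_, S, hS, rfl⟩

theorem le_kSmallestSum (hk : k ≤ n) {c : ℕ}
    (h : ∀ S : Finset (Fin n), #S = k → c ≤ ∑ l ∈ S, u l) :
    c ≤ kSmallestSum u k :=
  let ⟨S, hS, heq⟩ := exists_kSmallestSum_eq (u := u) hk
  heq ▸ h S hS

theorem kSmallestSum_self : kSmallestSum u n = ∑ l, u l :=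
  le_antisymm (kSmallestSum_le (card_fin n)) <| le_kSmallestSum le_rfl fun S hS => by
    rw [eq_univ_of_card S (by simpa using hS)]

theorem kSmallestSum_pred_add_sup (hn : 0 < n) :
    kSmallestSum u (n - 1) + univ.sup u = ∑ l, u l := by
  obtain ⟨l₀, -, hl₀⟩ := exists_mem_eq_sup univ (univ_nonempty_iff.2 ⟨⟨0, hn⟩⟩) u
  obtain ⟨S, hS, hSeq⟩ := exists_kSmallestSum_eq (u := u) (k := n - 1) (Nat.sub_le n 1)
  obtain ⟨l₁, hl₁⟩ : ∃ l₁, univ \ S = {l₁} :=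
    card_eq_one.1 (by simp only [card_sdiff, card_univ, Fintype.card_fin, inter_univ, hS]; omega)
  have hsplit := sum_sdiff (subset_univ S) (f := u)
  rw [hl₁, sum_singleton] at hsplit
  have := kSmallestSum_le (u := u) (k := n - 1) (S := univ.erase l₀) (by simp)
  have := sum_erase_add univ u (mem_univ l₀)
  have := le_sup (f := u) (mem_univ l₁)
  omega

theorem sup_eq_of_kSmallestSum_eq (hn : 0 < n)
    (h : ∀ k ≤ n, kSmallestSum u k = kSmallestSum u' k) :
    univ.sup u = univ.sup u' := by
  have := kSmallestSum_pred_add_sup (u := u) hn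
  have := kSmallestSum_pred_add_sup (u := u') hn
  have := h (n - 1) (Nat.sub_le n 1)
  have := h n le_rfl
  rw [kSmallestSum_self, kSmallestSum_self] at this
  omega

/-- A Pigou–Dalton transfer; the witness `k` is the number of agents no richer than `i`. -/
theorem exists_kSmallestSum_lt_of_transfer (hu : u' + Pi.single j 1 = u + Pi.single i 1)
    (hij : u i + 2 ≤ u j) : ∃ k ≤ n, kSmallestSum u k < kSmallestSum u' k := by
  have hne : i ≠ j := by rintro rfl; omega
  have hu' : ∀ l, u' l + (if l = j then 1 else 0) = u l + (if l = i then 1 else 0) := fun l => by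
    simpa [Pi.single_apply] using congrFun hu l
  have hu'i : u' i = u i + 1 := by simpa [hne] using hu' i
  have hu'j : u' j + 1 = u j := by simpa [hne.symm] using hu' j
  have hu'l : ∀ l, l ≠ i → l ≠ j → u' l = u l := fun l hli hlj => by
    simpa [hli, hlj] using hu' l
  set T : Finset (Fin n) := {l | u l ≤ u i}
  have hiT : i ∈ T := by simp [T]
  have hjT : j ∉ T := by simp [T]; omega
  have hTn : #T ≤ n := by simpa using card_le_univ T
  have hne_j : ∀ l ∈ T.erase i, l ≠ j := fun l hl h => hjT (h ▸ mem_of_mem_erase hl)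
  have hsum : ∑ l ∈ T.erase i, u' l = ∑ l ∈ T.erase i, u l :=
    sum_congr rfl fun l hl => hu'l l (ne_of_mem_erase hl) (hne_j l hl)
  have hlow : ∀ l ∈ T.erase i, u' l ≤ u i := fun l hl => by
    rw [hu'l l (ne_of_mem_erase hl) (hne_j l hl)]
    simpa [T] using mem_of_mem_erase hl
  have hhigh : ∀ l ∉ T.erase i, u i + 1 ≤ u' l := fun l hl => by
    by_cases hli : l = i
    · rw [hli]; omega
    by_cases hlj : l = j
    · rw [hlj]; omega
    have : u i < u l := by simpa [T, hli] using hl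
    rw [hu'l l hli hlj]
    omega
  refine ⟨#T, hTn, ?_⟩
  have := sum_erase_add T u hiT
  have := kSmallestSum_le (u := u) (rfl : #T = #T)
  have := le_kSmallestSum (u := u') hTn fun S hS =>
    sum_add_le_sum_of_threshold hlow hhigh (by rw [hS, card_erase_add_one hiT])
  omega

end SmallestSum

theorem exists_add_single_eq {ι : Type*} [DecidableEq ι] {x : ι → ℕ} {j : ι}
    (hj : 1 ≤ x j) (i : ι) : ∃ z : ι → ℕ, z + Pi.single j 1 = x + Pi.single i 1 :=
  ⟨x + Pi.single i 1 - Pi.single j 1, funext fun l => by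
    by_cases hlj : l = j
    · subst hlj
      simp only [Pi.add_apply, Pi.sub_apply, Pi.single_eq_same]
      omega
    · simp [hlj]⟩

section CleanLorenzDominating

variable {n m : ℕ} {P : Fin n → Matroidal m} {A A' : Fin n → Finset (Fin m)}

theorem Clean.val_eq_card (hA : Clean P A) : (fun l => (P l).v (A l)) = fun l => #(A l) :=
  funext hA

theorem inPolymatroid_card_of_mem_cLD (hA : A ∈ cLD P) :
    InPolymatroid (unionRank fun l => (P l).v) fun l => #(A l) := fun S => by
  simpa [hA.1 _] using sum_le_unionRank (fun l => (P l).isMatroidRank) (fun a b => hA.2.1 a b) S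

theorem sum_card_eq_unionRank_of_mem_cLD (hA : A ∈ cLD P) :
    ∑ l, #(A l) = unionRank (fun l => (P l).v) univ := by
  refine le_antisymm (inPolymatroid_card_of_mem_cLD hA univ) ?_
  obtain ⟨B, hB, hBclean, hk⟩ := exists_clean_allocation_of_le (fun l => (P l).isMatroidRank)
    (unionRank_le univ)
  have := hA.2.2 B (fun a b hab => hB hab) n le_rfl
  rw [hA.1.val_eq_card, Clean.val_eq_card hBclean, kSmallestSum_self, kSmallestSum_self] at this
  omega

theorem card_le_card_add_one_of_transfer (hA : A ∈ cLD P) {z : Fin n → ℕ} {i j : Fin n}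
    (hz : InPolymatroid (unionRank fun l => (P l).v) z)
    (hzA : z + Pi.single j 1 = (fun l => #(A l)) + Pi.single i 1) : #(A j) ≤ #(A i) + 1 := by
  by_contra! h
  obtain ⟨C, hC, hCclean, hCcard⟩ :=
    exists_clean_allocation_card_eq (fun l => (P l).isMatroidRank) hz
  obtain ⟨k, hk, hlt⟩ :=
    exists_kSmallestSum_lt_of_transfer hzA (show #(A i) + 2 ≤ #(A j) by omega)
  have := hA.2.2 C (fun a b hab => hC hab) k hk
  rw [hA.1.val_eq_card, Clean.val_eq_card hCclean, funext hCcard] at this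
  omega

theorem card_le_card_add_one_of_mem_cLD (hA : A ∈ cLD P) (hA' : A' ∈ cLD P) (i : Fin n) :
    #(A' i) ≤ #(A i) + 1 := by
  by_contra! h
  have hx := inPolymatroid_card_of_mem_cLD hA
  have hy := inPolymatroid_card_of_mem_cLD hA'
  obtain ⟨j, hyx, hx_tight, hy_tight⟩ := hx.exists_exchange
    (unionRank_union_add_inter_le fun l => (P l).isMatroidRank) unionRank_empty
    (sum_card_eq_unionRank_of_mem_cLD hA) hy (show #(A i) < #(A' i) by omega)
  obtain ⟨z, hz⟩ := exists_add_single_eq (x := fun l => #(A l)) (show 1 ≤ #(A j) by omega) i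
  obtain ⟨z', hz'⟩ :=
    exists_add_single_eq (x := fun l => #(A' l)) (show 1 ≤ #(A' i) by omega) j
  have hj : #(A j) ≤ #(A i) + 1 :=
    card_le_card_add_one_of_transfer hA (hx.of_transfer hx_tight hz) hz
  have hi : #(A' i) ≤ #(A' j) + 1 :=
    card_le_card_add_one_of_transfer hA' (hy.of_transfer hy_tight hz') hz'
  omega

theorem sup_card_eq_of_mem_cLD (hA : A ∈ cLD P) (hA' : A' ∈ cLD P) (hn : 0 < n) :
    univ.sup (fun l => #(A l)) = univ.sup (fun l => #(A' l)) :=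
  sup_eq_of_kSmallestSum_eq hn fun k hk => by
    have h₁ := hA.2.2 A' hA'.2.1 k hk
    have h₂ := hA'.2.2 A hA.2.1 k hk
    rw [hA.1.val_eq_card, hA'.1.val_eq_card] at h₁ h₂
    exact le_antisymm h₂ h₁

theorem minSize_eq_of_card_lt (hA : A ∈ cLD P) (hA' : A' ∈ cLD P) {i : Fin n}
    (h : #(A i) < #(A' i)) : minSize P i = #(A i) := by
  obtain ⟨B, hB, hBmin⟩ : ∃ B ∈ cLD P, minSize P i = #(B i) :=
    Nat.sInf_mem (s := {c | ∃ B ∈ cLD P, c = #(B i)}) ⟨_, A, hA, rfl⟩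
  have := card_le_card_add_one_of_mem_cLD hB hA' i
  have : minSize P i ≤ #(A i) := Nat.sInf_le ⟨A, hA, rfl⟩
  omega

theorem card_add_sePay_eq_of_card_lt (hA : A ∈ cLD P) (hA' : A' ∈ cLD P) {i : Fin n}
    (h : #(A i) < #(A' i)) : #(A i) + sePay P A i = #(A' i) + sePay P A' i := by
  have hmin := minSize_eq_of_card_lt hA hA' h
  have := card_le_card_add_one_of_mem_cLD hA hA' i
  have hsup := sup_card_eq_of_mem_cLD hA hA' i.pos
  have := le_sup (f := fun l => #(A' l)) (mem_univ i)
  rw [sePay, sePay, if_pos ⟨hmin.symm, by omega⟩, if_neg fun h' => by omega]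
  omega

end CleanLorenzDominating

/-- Proposition 3.8: the utility of each agent in the SE mechanism does not depend on
the choice of the clean Lorenz dominating allocation. -/
theorem se_utility_independent {n m : ℕ} (P : Fin n → Matroidal m) (i : Fin n)
    (A A' : Fin n → Finset (Fin m)) (hA : A ∈ cLD P) (hA' : A' ∈ cLD P) :
    (A i).card + sePay P A i = (A' i).card + sePay P A' i := by
  rcases lt_trichotomy #(A i) #(A' i) with h | h | h
  · exact card_add_sePay_eq_of_card_lt hA hA' h
  · simp only [sePay, h, sup_card_eq_of_mem_cLD hA hA' i.pos]
  · exact (card_add_sePay_eq_of_card_lt hA' hA h).symm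
end

section
/- Fix an agent i and let (v_1,…,v_n) be matroidal valuations. For subsets X ⊆ Y ⊆ M, let P = (v_1,…,v_i|X,…,v_n) and P' = (v_1,…,v_i|Y,…,v_n). Suppose there exists A' ∈ cLD(P') with A'_i = Y and |A'_i| < max_{j∈N} |A'_j|. Then |A_i| < max_{j∈N} |A_j| for every A ∈ cLD(P). -/
open Finset

lemma kS_le {n : ℕ} (u : Fin n → ℕ) (S : Finset (Fin n)) :
    kSmallestSum u S.card ≤ ∑ i ∈ S, u i :=
  csInf_le (OrderBot.bddBelow _) ⟨S, rfl, rfl⟩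

lemma le_kS {n k : ℕ} (u : Fin n → ℕ) (a : ℕ) (hk : k ≤ n)
    (h : ∀ S : Finset (Fin n), S.card = k → a ≤ ∑ i ∈ S, u i) :
    a ≤ kSmallestSum u k := by
  obtain ⟨T, _, hT⟩ := Finset.exists_subset_card_eq (s := (Finset.univ : Finset (Fin n)))
    (n := k) (by simpa using hk)
  exact le_csInf ⟨∑ i ∈ T, u i, T, hT, rfl⟩ (by rintro s ⟨S, hS, rfl⟩; exact h S hS)

lemma kS_univ {n : ℕ} (u : Fin n → ℕ) : kSmallestSum u n = ∑ i, u i := by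
  apply le_antisymm
  · have := kS_le u Finset.univ
    simpa using this
  · apply le_kS u _ le_rfl
    intro S hS
    have : S = Finset.univ := Finset.eq_univ_of_card S (by simpa using hS)
    simp [this]

lemma kS_mono {n k : ℕ} (u w : Fin n → ℕ) (hk : k ≤ n) (h : ∀ j, u j ≤ w j) :
    kSmallestSum u k ≤ kSmallestSum w k := by
  obtain ⟨T, _, hT⟩ := Finset.exists_subset_card_eq (s := (Finset.univ : Finset (Fin n)))
    (n := k) (by simpa using hk)
  refine le_csInf ⟨∑ i ∈ T, w i, T, hT, rfl⟩ ?_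
  rintro s ⟨S, hS, rfl⟩
  calc kSmallestSum u k = kSmallestSum u S.card := by rw [hS]
    _ ≤ ∑ j ∈ S, u j := kS_le u S
    _ ≤ ∑ j ∈ S, w j := Finset.sum_le_sum (fun j _ => h j)

lemma eq_erase {n : ℕ} (S : Finset (Fin n)) (hn : 0 < n) (h : S.card = n - 1) :
    ∃ j, S = Finset.univ.erase j := by
  have hsub : S ⊆ Finset.univ := Finset.subset_univ S
  have hc : (Finset.univ \ S).card = 1 := by
    rw [Finset.card_sdiff_of_subset hsub, Finset.card_univ, Fintype.card_fin, h]
    omega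
  obtain ⟨j, hj⟩ := Finset.card_eq_one.mp hc
  refine ⟨j, ?_⟩
  have h2 : Finset.univ \ (Finset.univ \ S) = S := Finset.sdiff_sdiff_eq_self hsub
  rw [hj] at h2
  rw [← h2, Finset.erase_eq]

lemma le_kS_pred {n : ℕ} (u : Fin n → ℕ) (i : Fin n) (hmax : ∀ j, u j ≤ u i) :
    ∑ j ∈ Finset.univ.erase i, u j ≤ kSmallestSum u (n - 1) := by
  apply le_kS u _ (Nat.sub_le n 1)
  intro S hS
  obtain ⟨j', rfl⟩ := eq_erase S i.pos hS
  have h1 := Finset.add_sum_erase Finset.univ u (Finset.mem_univ i)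
  have h2 := Finset.add_sum_erase Finset.univ u (Finset.mem_univ j')
  have h3 := hmax j'
  omega

/-- Lemma 3.12: if for the profile where agent `i`'s valuation is restricted to `Y`
some clean Lorenz dominating allocation gives `i` exactly `Y`, which is strictly
smaller than the largest bundle, then for any smaller restriction `X ⊆ Y`, in every
clean Lorenz dominating allocation agent `i`'s bundle is strictly smaller than the
largest bundle. -/
theorem restrict_not_max {n m : ℕ} (v : Fin n → Matroidal m) (i : Fin n)
    (X Y : Finset (Fin m)) (hXY : X ⊆ Y)
    (hA' : ∃ A' ∈ cLD (Function.update v i ((v i).restrict Y)),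
      A' i = Y ∧ (A' i).card < Finset.univ.sup (fun j => (A' j).card)) :
    ∀ A ∈ cLD (Function.update v i ((v i).restrict X)),
      (A i).card < Finset.univ.sup (fun j => (A j).card) := by
  obtain ⟨A', hA'mem, hA'i, hA'max⟩ := hA'
  obtain ⟨hA'clean, hA'alloc, hA'dom⟩ := hA'mem
  rintro A ⟨hAclean, hAalloc, hAdom⟩
  by_contra hcon
  push_neg at hcon
  set P := Function.update v i ((v i).restrict X) with hP
  set P' := Function.update v i ((v i).restrict Y) with hP'
  set c : Fin n → ℕ := fun j => (P j).v (A j) with hcdef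
  set b : Fin n → ℕ := fun j => (P' j).v (A' j) with hbdef
  set u1 : Fin n → ℕ := fun j => (P j).v (A' j) with hu1def
  set u2 : Fin n → ℕ := fun j => (P' j).v (A j) with hu2def
  have hc : ∀ j, c j = (A j).card := hAclean
  have hb : ∀ j, b j = (A' j).card := hA'clean
  -- j₀: agent with the largest bundle in A'
  obtain ⟨j₀, _, hj₀⟩ := Finset.exists_mem_eq_sup Finset.univ
    ⟨i, Finset.mem_univ i⟩ (fun j => (A' j).card)
  have hbij₀ : b i < b j₀ := by
    rw [hb i, hb j₀, ← hj₀]; exact hA'max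
  -- c i is the max of c (contradiction hypothesis)
  have hcmax : ∀ j, c j ≤ c i := by
    intro j
    rw [hc j, hc i]
    exact le_trans (Finset.le_sup (f := fun j => (A j).card) (Finset.mem_univ j)) hcon
  -- pointwise values at i
  have hPi : P i = (v i).restrict X := Function.update_self i _ v
  have hP'i : P' i = (v i).restrict Y := Function.update_self i _ v
  have hu1i : u1 i = (v i).v X := by
    simp only [hu1def, hPi, Matroidal.restrict, hA'i,
      Finset.inter_eq_left.mpr hXY]
  have hci_le : c i ≤ (v i).v X := by
    simp only [hcdef, hPi, Matroidal.restrict]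
    exact (v i).mono (Finset.inter_subset_left)
  have hcu2 : ∀ j, c j ≤ u2 j := by
    intro j
    by_cases hji : j = i
    · subst hji
      show (P j).v (A j) ≤ (P' j).v (A j)
      simp only [hcdef, hu2def, hPi, hP'i, Matroidal.restrict]
      exact (v j).mono (Finset.inter_subset_inter hXY le_rfl)
    · simp only [hcdef, hu2def, hP, hP', Function.update_of_ne hji]
      exact le_rfl
  have hbu1 : ∀ j ∈ Finset.univ.erase i, u1 j = b j := by
    intro j hj
    have hji : j ≠ i := Finset.ne_of_mem_erase hj
    simp only [hu1def, hbdef, hP, hP', Function.update_of_ne hji]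
  have hn : 0 < n := i.pos
  -- (1) total welfare: ∑ u1 ≤ ∑ c
  have h1 : ∑ j, u1 j ≤ ∑ j, c j := by
    have := hAdom A' hA'alloc n le_rfl
    rwa [kS_univ, kS_univ] at this
  -- (2) (n-1)-smallest sums
  have h2 : ∑ j ∈ Finset.univ.erase i, c j ≤ ∑ j ∈ Finset.univ.erase j₀, b j := by
    calc ∑ j ∈ Finset.univ.erase i, c j ≤ kSmallestSum c (n - 1) := le_kS_pred c i hcmax
      _ ≤ kSmallestSum u2 (n - 1) := kS_mono c u2 (Nat.sub_le n 1) hcu2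
      _ ≤ kSmallestSum b (n - 1) := hA'dom A hAalloc (n - 1) (Nat.sub_le n 1)
      _ ≤ ∑ j ∈ Finset.univ.erase j₀, b j := by
          have := kS_le b (Finset.univ.erase j₀)
          rwa [Finset.card_erase_of_mem (Finset.mem_univ j₀), Finset.card_univ,
            Fintype.card_fin] at this
  -- sum decompositions
  have e1 := Finset.add_sum_erase Finset.univ c (Finset.mem_univ i)
  have e2 := Finset.add_sum_erase Finset.univ b (Finset.mem_univ i)
  have e3 := Finset.add_sum_erase Finset.univ b (Finset.mem_univ j₀)
  have e4 := Finset.add_sum_erase Finset.univ u1 (Finset.mem_univ i)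
  have e5 : ∑ j ∈ Finset.univ.erase i, u1 j = ∑ j ∈ Finset.univ.erase i, b j :=
    Finset.sum_congr rfl hbu1
  have hci_le' : c i ≤ u1 i := by rw [hu1i]; exact hci_le
  omega
end
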